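/- arXiv:1809.03028 — 6 statements merged into one kernel-verified Lean document; each statement's English description precedes it below -/
import Mathlib

section
/- For every α, β ∈ ℕ there exist complex coefficients b^{(α,β)}_{j,k,l,m,n}, indexed by tuples (j,k,l,m,n) of natural numbers with j + k + l + n ≤ α + β and j + l + m ≤ β, such that for every complex parameter ν and all smooth functions g₁, g₂ : ℝ∖{0} → ℂ one has the Leibniz-type identity 𝒰^β 𝒳^α (g₁·g₂) = Σ_{j+k+l+n ≤ α+β, j+l+m ≤ β} b^{(α,β)}_{j,k,l,m,n} · (𝒰^j 𝒳^k g₁) · ((ξ·d²/dξ²)^l (d/dξ)^m 𝒳^n g₂), where (ξ·d²/dξ²) denotes the operator sending h to the function ξ ↦ ξ·h″(ξ). -/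
/-!
Work in a commutative differential `ℂ`-algebra `(A, ∂)` containing `x` with `∂x = 1` and its
inverse `y`, where `𝒳 = -2x∂`, `𝒰 = i((ν²-1)/4 · y - x∂²)` and `K = x∂²`.  The product rules give
`𝒰^β 𝒳^(α+1) (ab) = 𝒰^β 𝒳^α ((𝒳a)b + a(𝒳b))` and
`𝒰^(β+1) (ab) = 𝒰^β ((𝒰a)b + i(𝒳a)(∂b) - ia(Kb))`, so induction on `α` and `β` reduces the claim to
the fact that substituting `𝒳a`, `𝒳b`, `𝒰a`, `∂b` or `Kb` into an admissible term
`(𝒰^j 𝒳^k a)(K^l ∂^m 𝒳^n b)` gives a combination of admissible terms.  That follows from the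
commutation relations `𝒳𝒰 = 𝒰(𝒳 + 2)`, `𝒳∂ = ∂(𝒳 + 2)`, `𝒳K = K(𝒳 + 2)` and `∂K = K∂ + ∂²`.
Smooth functions on `ℝ ∖ {0}` form such an algebra, on which `calX`, `calU`, `xiD2` act as `𝒳`, `𝒰`,
`K`.
-/

open Complex Finset

/-- The operator `𝒳 f (ξ) = -2 ξ f'(ξ)`. -/
noncomputable def calX (f : ℝ → ℂ) : ℝ → ℂ := fun ξ => -2 * (ξ : ℂ) * deriv f ξ

/-- The operator `𝒰 f (ξ) = i((ν²-1)/(4ξ) f(ξ) - ξ f''(ξ))`. -/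
noncomputable def calU (ν : ℂ) (f : ℝ → ℂ) : ℝ → ℂ :=
  fun ξ => Complex.I * ((ν ^ 2 - 1) / (4 * (ξ : ℂ)) * f ξ - (ξ : ℂ) * deriv (deriv f) ξ)

/-- The operator `h ↦ (ξ ↦ ξ·h″(ξ))`. -/
noncomputable def xiD2 (h : ℝ → ℂ) : ℝ → ℂ := fun ξ => (ξ : ℂ) * deriv (deriv h) ξ

open Polynomial

lemma LinearMap.apply_mem_of_natDegree_le {R M : Type*} [CommRing R] [AddCommGroup M]
    [Module R M] (L : R[X] →ₗ[R] M) (N : Submodule R M) {k : ℕ}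
    (h : ∀ i ≤ k, L (X ^ i) ∈ N) {p : R[X]} (hp : p.natDegree ≤ k) : L p ∈ N := by
  rw [p.as_sum_range' (k + 1) (by omega), map_sum]
  refine N.sum_mem fun i hi => ?_
  rw [← C_mul_X_pow_eq_monomial, ← smul_eq_C_mul, map_smul]
  exact N.smul_mem _ (h i (Nat.lt_succ_iff.1 (Finset.mem_range.1 hi)))

lemma pow_mul_eq_of_mul_eq_add_sq {R : Type*} [Ring R] {d k : R} (h : d * k = k * d + d ^ 2)
    (m : ℕ) : d ^ m * k = k * d ^ m + m • d ^ (m + 1) := by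
  induction m with
  | zero => simp
  | succ m ih =>
    calc d ^ (m + 1) * k = d * (d ^ m * k) := by rw [pow_succ', mul_assoc]
      _ = d * k * d ^ m + m • (d * d ^ (m + 1)) := by rw [ih, mul_add, mul_smul_comm, mul_assoc]
      _ = k * d ^ (m + 1) + (m + 1) • d ^ (m + 1 + 1) := by
        rw [h, add_mul, sq]
        simp only [mul_assoc, ← pow_succ']
        rw [succ_nsmul]
        abel

namespace CalUX

section DifferentialAlgebra

variable {A : Type*} [CommRing A] [Algebra ℂ A] (D : Derivation ℂ A A) (x y : A)

noncomputable def opX : Module.End ℂ A := (-2 : ℂ) • (LinearMap.mulLeft ℂ x * D)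

noncomputable def opK : Module.End ℂ A := LinearMap.mulLeft ℂ x * D ^ 2

noncomputable def opU (ν : ℂ) : Module.End ℂ A :=
  I • (((ν ^ 2 - 1) / 4 : ℂ) • LinearMap.mulLeft ℂ y - opK D x)

variable {D x y}

@[simp] lemma opX_apply (a : A) : opX D x a = (-2 : ℂ) • (x * D a) := rfl

@[simp] lemma opK_apply (a : A) : opK D x a = x * D (D a) := by
  simp [opK, pow_two]

@[simp] lemma opU_apply (ν : ℂ) (a : A) :
    opU D x y ν a = I • (((ν ^ 2 - 1) / 4 : ℂ) • (y * a) - x * D (D a)) := by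
  simp [opU]

lemma map_eq_neg_sq_of_mul_eq_one (hx : D x = 1) (hxy : x * y = 1) : D y = -y ^ 2 := by
  have h := D.leibniz x y
  rw [hxy, Derivation.map_one_eq_zero, hx, smul_eq_mul, smul_eq_mul, mul_one] at h
  linear_combination (-y) * h - D y * hxy

lemma opX_mul_apply (a b : A) : opX D x (a * b) = opX D x a * b + a * opX D x b := by
  simp only [opX_apply, Derivation.leibniz, smul_eq_mul, Algebra.smul_def]
  ring

lemma opU_mul_apply (ν : ℂ) (a b : A) :
    opU D x y ν (a * b) = opU D x y ν a * b + I • (opX D x a * D b) - I • (a * opK D x b) := by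
  simp only [opU_apply, opX_apply, opK_apply, Derivation.leibniz, map_add, smul_eq_mul,
    Algebra.smul_def, map_neg, map_ofNat]
  ring

lemma opX_mul_opU (hx : D x = 1) (hxy : x * y = 1) (ν : ℂ) :
    opX D x * opU D x y ν = opU D x y ν * (opX D x + 2) := by
  ext a
  simp only [Module.End.mul_apply, LinearMap.add_apply, opU_apply, opX_apply, map_sub, map_smul,
    map_nsmul, Derivation.leibniz, smul_eq_mul, map_add, hx, map_eq_neg_sq_of_mul_eq_one hx hxy,
    Module.End.ofNat_apply]
  simp only [Algebra.smul_def, map_ofNat, map_neg, Derivation.map_one_eq_zero]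
  linear_combination (2 * algebraMap ℂ A I * algebraMap ℂ A ((ν ^ 2 - 1) / 4) * y * a) * hxy

lemma opX_mul_deriv (hx : D x = 1) : opX D x * D = D * (opX D x + 2) := by
  ext a
  simp only [Module.End.mul_apply, LinearMap.add_apply, opX_apply, map_smul, map_nsmul,
    Derivation.leibniz, smul_eq_mul, map_add, hx, Module.End.ofNat_apply, Derivation.coeFn_coe]
  simp only [Algebra.smul_def, map_ofNat, map_neg]
  ring

lemma opX_mul_opK (hx : D x = 1) : opX D x * opK D x = opK D x * (opX D x + 2) := by
  ext a
  simp only [Module.End.mul_apply, LinearMap.add_apply, opX_apply, opK_apply, map_smul,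
    map_nsmul, Derivation.leibniz, smul_eq_mul, map_add, hx, Module.End.ofNat_apply,
    Derivation.map_one_eq_zero]
  simp only [Algebra.smul_def, map_ofNat, map_neg]
  ring

lemma deriv_mul_opK (hx : D x = 1) : (D : Module.End ℂ A) * opK D x = opK D x * D + D ^ 2 := by
  ext a
  simp only [Module.End.mul_apply, LinearMap.add_apply, opK_apply, Derivation.leibniz, hx,
    Derivation.coeFn_coe, pow_two, smul_eq_mul]
  ring

variable (D x y)

def Admissible (α β : ℕ) : ℕ × ℕ × ℕ × ℕ × ℕ → Prop
  | (j, k, l, m, n) => j + k + l + n ≤ α + β ∧ j + l + m ≤ β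

/-- Polynomials in `𝒳` rather than powers: moving `𝒳` past `𝒰`, `∂` or `K` turns `𝒳^n` into
`(𝒳 + 2)^n`. -/
noncomputable def leibnizTerm (j l m : ℕ) : ℂ[X] →ₗ[ℂ] ℂ[X] →ₗ[ℂ] (ℂ → A → A → A) :=
  LinearMap.mk₂ ℂ (fun p q ν a b => (opU D x y ν ^ j * aeval (opX D x) p) a *
      (opK D x ^ l * (D : Module.End ℂ A) ^ m * aeval (opX D x) q) b)
    (fun _ _ _ => by ext; simp [add_mul])
    (fun _ _ _ => by ext; simp)
    (fun _ _ _ => by ext; simp [mul_add])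
    (fun _ _ _ => by ext; simp)

noncomputable def monomialTerm : ℕ × ℕ × ℕ × ℕ × ℕ → (ℂ → A → A → A)
  | (j, k, l, m, n) => leibnizTerm D x y j l m (X ^ k) (X ^ n)

noncomputable def leibnizSpan (α β : ℕ) : Submodule ℂ (ℂ → A → A → A) :=
  Submodule.span ℂ (monomialTerm D x y '' {t | Admissible α β t})

noncomputable def substitute (F G : ℂ → Module.End ℂ A) :
    (ℂ → A → A → A) →ₗ[ℂ] (ℂ → A → A → A) where
  toFun Φ ν a b := Φ ν (F ν a) (G ν b)
  map_add' _ _ := rfl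
  map_smul' _ _ := rfl

variable {D x y}

lemma leibnizTerm_apply (j l m : ℕ) (p q : ℂ[X]) (ν : ℂ) (a b : A) :
    leibnizTerm D x y j l m p q ν a b = (opU D x y ν ^ j * aeval (opX D x) p) a *
      (opK D x ^ l * (D : Module.End ℂ A) ^ m * aeval (opX D x) q) b := rfl

lemma leibnizTerm_mem_leibnizSpan {α β j k l m n : ℕ} {p q : ℂ[X]} (hp : p.natDegree ≤ k)
    (hq : q.natDegree ≤ n) (h : Admissible α β (j, k, l, m, n)) :
    leibnizTerm D x y j l m p q ∈ leibnizSpan D x y α β := by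
  refine (leibnizTerm D x y j l m p).apply_mem_of_natDegree_le _ (fun t ht => ?_) hq
  refine ((leibnizTerm D x y j l m).flip (X ^ t)).apply_mem_of_natDegree_le _
    (fun s hs => ?_) hp
  obtain ⟨h₁, h₂⟩ := h
  exact Submodule.subset_span ⟨(j, s, l, m, t), ⟨by omega, by omega⟩, rfl⟩

lemma aeval_X_add_C_two_pow (n : ℕ) (T : Module.End ℂ A) :
    aeval T ((X + C (2 : ℂ)) ^ n) = (T + 2) ^ n := by
  rw [map_pow, map_add, aeval_X, aeval_C, map_ofNat]

lemma natDegree_X_add_C_pow_le (c : ℂ) (n : ℕ) : ((X + C c) ^ n).natDegree ≤ n :=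
  (natDegree_pow_le_of_le n (natDegree_X_add_C c).le).trans_eq (mul_one n)

lemma substitute_monomialTerm_apply (F G : ℂ → Module.End ℂ A) (j k l m n : ℕ) (ν : ℂ)
    (a b : A) :
    substitute F G (monomialTerm D x y (j, k, l, m, n)) ν a b =
      (opU D x y ν ^ j * opX D x ^ k * F ν) a *
        (opK D x ^ l * (D : Module.End ℂ A) ^ m * opX D x ^ n * G ν) b := by
  simp [substitute, monomialTerm, leibnizTerm_apply]

lemma substitute_mem_leibnizSpan {F G : ℂ → Module.End ℂ A} {α β α' β' : ℕ}
    (h : ∀ t, Admissible α β t →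
      substitute F G (monomialTerm D x y t) ∈ leibnizSpan D x y α' β')
    {Φ : ℂ → A → A → A} (hΦ : Φ ∈ leibnizSpan D x y α β) :
    substitute F G Φ ∈ leibnizSpan D x y α' β' :=
  (Submodule.map_span_le _ _ _).2 (by rintro _ ⟨t, ht, rfl⟩; exact h t ht)
    (Submodule.mem_map_of_mem hΦ)

lemma substitute_left_opX_mem {α β : ℕ} {Φ : ℂ → A → A → A}
    (hΦ : Φ ∈ leibnizSpan D x y α β) :
    substitute (fun _ => opX D x) (fun _ => 1) Φ ∈ leibnizSpan D x y (α + 1) β := by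
  refine substitute_mem_leibnizSpan (fun ⟨j, k, l, m, n⟩ ⟨h₁, h₂⟩ => ?_) hΦ
  have : substitute (fun _ => opX D x) (fun _ => 1) (monomialTerm D x y (j, k, l, m, n)) =
      leibnizTerm D x y j l m (X ^ (k + 1)) (X ^ n) := by
    ext ν a b
    simp [substitute_monomialTerm_apply, leibnizTerm_apply, pow_succ, mul_assoc]
  rw [this]
  exact leibnizTerm_mem_leibnizSpan (natDegree_X_pow_le _) (natDegree_X_pow_le _)
    ⟨by omega, by omega⟩

lemma substitute_right_opX_mem {α β : ℕ} {Φ : ℂ → A → A → A}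
    (hΦ : Φ ∈ leibnizSpan D x y α β) :
    substitute (fun _ => 1) (fun _ => opX D x) Φ ∈ leibnizSpan D x y (α + 1) β := by
  refine substitute_mem_leibnizSpan (fun ⟨j, k, l, m, n⟩ ⟨h₁, h₂⟩ => ?_) hΦ
  have : substitute (fun _ => 1) (fun _ => opX D x) (monomialTerm D x y (j, k, l, m, n)) =
      leibnizTerm D x y j l m (X ^ k) (X ^ (n + 1)) := by
    ext ν a b
    simp [substitute_monomialTerm_apply, leibnizTerm_apply, pow_succ, mul_assoc]
  rw [this]
  exact leibnizTerm_mem_leibnizSpan (natDegree_X_pow_le _) (natDegree_X_pow_le _)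
    ⟨by omega, by omega⟩

lemma substitute_left_opU_mem (hx : D x = 1) (hxy : x * y = 1) {α β : ℕ}
    {Φ : ℂ → A → A → A} (hΦ : Φ ∈ leibnizSpan D x y α β) :
    substitute (opU D x y) (fun _ => 1) Φ ∈ leibnizSpan D x y α (β + 1) := by
  refine substitute_mem_leibnizSpan (fun ⟨j, k, l, m, n⟩ ⟨h₁, h₂⟩ => ?_) hΦ
  have : substitute (opU D x y) (fun _ => 1) (monomialTerm D x y (j, k, l, m, n)) =
      leibnizTerm D x y (j + 1) l m ((X + C 2) ^ k) (X ^ n) := by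
    ext ν a b
    rw [substitute_monomialTerm_apply, leibnizTerm_apply, aeval_X_add_C_two_pow, pow_succ,
      mul_assoc _ (opU D x y ν), (SemiconjBy.pow_right (opX_mul_opU hx hxy ν).symm k).eq,
      mul_assoc]
    simp
  rw [this]
  exact leibnizTerm_mem_leibnizSpan (natDegree_X_add_C_pow_le _ _) (natDegree_X_pow_le _)
    ⟨by omega, by omega⟩

lemma substitute_opX_deriv_mem (hx : D x = 1) {α β : ℕ} {Φ : ℂ → A → A → A}
    (hΦ : Φ ∈ leibnizSpan D x y α β) :
    substitute (fun _ => opX D x) (fun _ => D) Φ ∈ leibnizSpan D x y α (β + 1) := by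
  refine substitute_mem_leibnizSpan (fun ⟨j, k, l, m, n⟩ ⟨h₁, h₂⟩ => ?_) hΦ
  have : substitute (fun _ => opX D x) (fun _ => D) (monomialTerm D x y (j, k, l, m, n)) =
      leibnizTerm D x y j l (m + 1) (X ^ (k + 1)) ((X + C 2) ^ n) := by
    ext ν a b
    rw [substitute_monomialTerm_apply, leibnizTerm_apply, aeval_X_add_C_two_pow,
      mul_assoc _ _ (D : Module.End ℂ A), ← (SemiconjBy.pow_right (opX_mul_deriv hx).symm n).eq,
      pow_succ _ m]
    simp [pow_succ, mul_assoc]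
  rw [this]
  exact leibnizTerm_mem_leibnizSpan (natDegree_X_pow_le _) (natDegree_X_add_C_pow_le _ _)
    ⟨by omega, by omega⟩

lemma substitute_right_opK_mem (hx : D x = 1) {α β : ℕ} {Φ : ℂ → A → A → A}
    (hΦ : Φ ∈ leibnizSpan D x y α β) :
    substitute (fun _ => 1) (fun _ => opK D x) Φ ∈ leibnizSpan D x y α (β + 1) := by
  refine substitute_mem_leibnizSpan (fun ⟨j, k, l, m, n⟩ ⟨h₁, h₂⟩ => ?_) hΦ
  have hK : opK D x ^ l * (D : Module.End ℂ A) ^ m * opX D x ^ n * opK D x =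
      opK D x ^ (l + 1) * (D : Module.End ℂ A) ^ m * (opX D x + 2) ^ n +
        m • (opK D x ^ l * (D : Module.End ℂ A) ^ (m + 1) * (opX D x + 2) ^ n) := by
    rw [mul_assoc _ _ (opK D x), ← (SemiconjBy.pow_right (opX_mul_opK hx).symm n).eq,
      ← mul_assoc, mul_assoc _ _ (opK D x), pow_mul_eq_of_mul_eq_add_sq (deriv_mul_opK hx) m]
    simp only [mul_add, add_mul, mul_smul_comm, smul_mul_assoc, pow_succ, mul_assoc]
  have : substitute (fun _ => 1) (fun _ => opK D x) (monomialTerm D x y (j, k, l, m, n)) =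
      leibnizTerm D x y j (l + 1) m (X ^ k) ((X + C 2) ^ n) +
        m • leibnizTerm D x y j l (m + 1) (X ^ k) ((X + C 2) ^ n) := by
    ext ν a b
    rw [substitute_monomialTerm_apply, hK]
    simp only [LinearMap.add_apply, leibnizTerm_apply, aeval_X_add_C_two_pow, aeval_X_pow,
      LinearMap.smul_apply, Module.End.mul_apply, Pi.add_apply, Pi.smul_apply,
      Module.End.one_apply, mul_add, mul_smul_comm]
  rw [this]
  exact add_mem
    (leibnizTerm_mem_leibnizSpan (natDegree_X_pow_le _) (natDegree_X_add_C_pow_le _ _)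
      ⟨by omega, by omega⟩)
    (nsmul_mem (leibnizTerm_mem_leibnizSpan (natDegree_X_pow_le _)
      (natDegree_X_add_C_pow_le _ _) ⟨by omega, by omega⟩) _)

theorem opU_pow_mul_opX_pow_mem_leibnizSpan (hx : D x = 1) (hxy : x * y = 1) (α β : ℕ) :
    (fun ν a b => (opU D x y ν ^ β * opX D x ^ α) (a * b)) ∈ leibnizSpan D x y α β := by
  induction α with
  | zero =>
    induction β with
    | zero =>
      have : (fun ν a b => (opU D x y ν ^ 0 * opX D x ^ 0) (a * b)) =
          leibnizTerm D x y 0 0 0 (X ^ 0) (X ^ 0) := by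
        ext; simp [leibnizTerm_apply]
      exact this ▸ leibnizTerm_mem_leibnizSpan (k := 0) (n := 0) (by simp) (by simp)
        ⟨le_rfl, le_rfl⟩
    | succ β ih =>
      set Φ : ℂ → A → A → A := fun ν a b => (opU D x y ν ^ β * opX D x ^ 0) (a * b)
      have : (fun ν a b => (opU D x y ν ^ (β + 1) * opX D x ^ 0) (a * b)) =
          substitute (opU D x y) (fun _ => 1) Φ +
            I • substitute (fun _ => opX D x) (fun _ => D) Φ -
            I • substitute (fun _ => 1) (fun _ => opK D x) Φ := by
        ext ν a b
        simp only [Φ, substitute, LinearMap.coe_mk, AddHom.coe_mk, Pi.add_apply, Pi.sub_apply,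
          Pi.smul_apply, pow_zero, mul_one, pow_succ, Module.End.mul_apply, Module.End.one_apply,
          opU_mul_apply, map_add, map_sub, map_smul, Derivation.coeFn_coe]
      rw [this]
      exact sub_mem (add_mem (substitute_left_opU_mem hx hxy ih)
        (Submodule.smul_mem _ _ (substitute_opX_deriv_mem hx ih)))
        (Submodule.smul_mem _ _ (substitute_right_opK_mem hx ih))
  | succ α ih =>
    set Φ : ℂ → A → A → A := fun ν a b => (opU D x y ν ^ β * opX D x ^ α) (a * b)
    have : (fun ν a b => (opU D x y ν ^ β * opX D x ^ (α + 1)) (a * b)) =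
        substitute (fun _ => opX D x) (fun _ => 1) Φ +
          substitute (fun _ => 1) (fun _ => opX D x) Φ := by
      ext ν a b
      simp only [Φ, substitute, LinearMap.coe_mk, AddHom.coe_mk, Pi.add_apply, pow_succ,
        Module.End.mul_apply, Module.End.one_apply, opX_mul_apply, map_add]
    rw [this]
    exact add_mem (substitute_left_opX_mem ih) (substitute_right_opX_mem ih)

lemma exists_coeffs_of_mem_leibnizSpan {α β : ℕ} {Φ : ℂ → A → A → A}
    (hΦ : Φ ∈ leibnizSpan D x y α β) :
    ∃ b : ℕ → ℕ → ℕ → ℕ → ℕ → ℂ,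
      (∀ j k l m n, ¬Admissible α β (j, k, l, m, n) → b j k l m n = 0) ∧
      ∀ ν a₁ a₂, Φ ν a₁ a₂ =
        ∑ j ∈ range (β + 1), ∑ k ∈ range (α + β + 1), ∑ l ∈ range (β + 1),
          ∑ m ∈ range (β + 1), ∑ n ∈ range (α + β + 1), b j k l m n •
            ((opU D x y ν ^ j * opX D x ^ k) a₁ *
              (opK D x ^ l * (D : Module.End ℂ A) ^ m * opX D x ^ n) a₂) := by
  obtain ⟨c, hc, rfl⟩ := (Finsupp.mem_span_image_iff_linearCombination ℂ).1 hΦ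
  rw [Finsupp.mem_supported'] at hc
  refine ⟨fun j k l m n => c (j, k, l, m, n), fun j k l m n h => hc _ h, fun ν a₁ a₂ => ?_⟩
  have hsub : c.support ⊆ range (β + 1) ×ˢ range (α + β + 1) ×ˢ range (β + 1) ×ˢ
      range (β + 1) ×ˢ range (α + β + 1) := by
    rintro ⟨j, k, l, m, n⟩ ht
    obtain ⟨h₁, h₂⟩ : Admissible α β (j, k, l, m, n) := by
      by_contra h
      exact Finsupp.mem_support_iff.1 ht (hc _ h)
    simp only [mem_product, mem_range]
    omega
  rw [Finsupp.linearCombination_apply, Finsupp.sum_of_support_subset c hsub _ (by simp)]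
  simp only [Finset.sum_apply, Pi.smul_apply, Finset.sum_product, monomialTerm, leibnizTerm_apply,
    aeval_X_pow]

end DifferentialAlgebra

section SmoothFunctions

/- Functions on `ℝ ∖ {0}` rather than on `ℝ`: there the coordinate is a unit, and the junk
values of `deriv` at `0` never enter. -/
abbrev Punctured : Set ℝ := {0}ᶜ

noncomputable def extendByZero (f : Punctured → ℂ) : ℝ → ℂ := Function.extend Subtype.val f 0

lemma extendByZero_apply (f : Punctured → ℂ) (ξ : Punctured) : extendByZero f ξ = f ξ :=
  Subtype.val_injective.extend_apply _ _ _

lemma domRestrict_extendByZero (f : Punctured → ℂ) :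
    Punctured.domRestrict (extendByZero f) = f :=
  funext (extendByZero_apply f)

lemma eventuallyEq_of_domRestrict_eq {F G : ℝ → ℂ}
    (h : Punctured.domRestrict F = Punctured.domRestrict G) (ξ : Punctured) :
    F =ᶠ[nhds (ξ : ℝ)] G :=
  Filter.eventuallyEq_of_mem (isOpen_compl_singleton.mem_nhds ξ.2) fun η hη =>
    congrFun h ⟨η, hη⟩

def smoothFun : Subalgebra ℂ (Punctured → ℂ) where
  carrier := {f | ContDiffOn ℝ (⊤ : ℕ∞) (extendByZero f) Punctured}
  mul_mem' {f g} hf hg := (hf.mul hg).congr fun η hη => by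
    simp only [Pi.mul_apply, extendByZero_apply f ⟨η, hη⟩, extendByZero_apply g ⟨η, hη⟩,
      extendByZero_apply (f * g) ⟨η, hη⟩]
  add_mem' {f g} hf hg := (hf.add hg).congr fun η hη => by
    simp only [Pi.add_apply, extendByZero_apply f ⟨η, hη⟩, extendByZero_apply g ⟨η, hη⟩,
      extendByZero_apply (f + g) ⟨η, hη⟩]
  algebraMap_mem' _ := contDiffOn_const.congr fun η hη => extendByZero_apply _ ⟨η, hη⟩

lemma domRestrict_mem_smoothFun {g : ℝ → ℂ} (hg : ContDiffOn ℝ (⊤ : ℕ∞) g Punctured) :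
    Punctured.domRestrict g ∈ smoothFun :=
  hg.congr fun η hη => extendByZero_apply _ ⟨η, hη⟩

lemma hasDerivAt_extendByZero {f : Punctured → ℂ} (hf : f ∈ smoothFun) (ξ : Punctured) :
    HasDerivAt (extendByZero f) (deriv (extendByZero f) ξ) ξ :=
  ((ContDiffOn.differentiableOn hf (by simp)).differentiableAt
    (isOpen_compl_singleton.mem_nhds ξ.2)).hasDerivAt

noncomputable def derivFun (f : Punctured → ℂ) : Punctured → ℂ :=
  Punctured.domRestrict (deriv (extendByZero f))

lemma derivFun_apply_eq {f : Punctured → ℂ} {F : ℝ → ℂ} (h : Punctured.domRestrict F = f)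
    {ξ : Punctured} {d : ℂ} (hd : HasDerivAt F d ξ) : derivFun f ξ = d := by
  rw [derivFun, Set.domRestrict_apply, (eventuallyEq_of_domRestrict_eq
    ((domRestrict_extendByZero f).trans h.symm) ξ).deriv_eq, hd.deriv]

lemma derivFun_domRestrict (g : ℝ → ℂ) :
    derivFun (Punctured.domRestrict g) = Punctured.domRestrict (deriv g) :=
  funext fun ξ => (eventuallyEq_of_domRestrict_eq (domRestrict_extendByZero _) ξ).deriv_eq

lemma derivFun_mem {f : Punctured → ℂ} (hf : f ∈ smoothFun) : derivFun f ∈ smoothFun :=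
  ((contDiffOn_infty_iff_deriv_of_isOpen isOpen_compl_singleton).1 hf).2.congr fun η hη =>
    extendByZero_apply _ ⟨η, hη⟩

noncomputable def derivSmooth : Derivation ℂ smoothFun smoothFun :=
  Derivation.mk'
    { toFun f := ⟨derivFun f, derivFun_mem f.2⟩
      map_add' f g := Subtype.ext <| funext fun ξ =>
        derivFun_apply_eq (F := extendByZero f + extendByZero g)
          (funext fun η => by simp [extendByZero_apply])
          ((hasDerivAt_extendByZero f.2 ξ).add (hasDerivAt_extendByZero g.2 ξ))
      map_smul' c f := Subtype.ext <| funext fun ξ =>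
        derivFun_apply_eq (F := c • extendByZero f)
          (funext fun η => by simp [extendByZero_apply])
          ((hasDerivAt_extendByZero f.2 ξ).const_smul c) }
    fun f g => Subtype.ext <| funext fun ξ => by
      refine (derivFun_apply_eq (F := extendByZero f * extendByZero g)
          (funext fun η => by simp [extendByZero_apply])
          ((hasDerivAt_extendByZero f.2 ξ).mul (hasDerivAt_extendByZero g.2 ξ))).trans ?_
      simp only [LinearMap.coe_mk, AddHom.coe_mk, derivFun, Set.domRestrict_apply,
        AddMemClass.coe_add, MulMemClass.coe_mul, Pi.add_apply, Pi.mul_apply, smul_eq_mul,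
        extendByZero_apply]
      ring

noncomputable def coordSmooth : smoothFun :=
  ⟨fun ξ => (ξ : ℂ), ofRealCLM.contDiff.contDiffOn.congr fun η hη =>
    extendByZero_apply _ ⟨η, hη⟩⟩

noncomputable def invCoordSmooth : smoothFun :=
  ⟨fun ξ => (ξ : ℂ)⁻¹, (ofRealCLM.contDiff.contDiffOn.inv fun _ hη => ofReal_ne_zero.2 hη).congr
    fun η hη => extendByZero_apply _ ⟨η, hη⟩⟩

lemma derivSmooth_coordSmooth : derivSmooth coordSmooth = 1 :=
  Subtype.ext <| funext fun ξ => derivFun_apply_eq (F := fun t : ℝ => (t : ℂ)) rfl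
    (by simpa using (hasDerivAt_id (ξ : ℝ)).ofReal_comp)

lemma coordSmooth_mul_invCoordSmooth : coordSmooth * invCoordSmooth = 1 :=
  Subtype.ext <| funext fun ξ => mul_inv_cancel₀ (ofReal_ne_zero.2 ξ.2)

variable {a : smoothFun} {g : ℝ → ℂ}

lemma coe_derivSmooth (h : (a : Punctured → ℂ) = Punctured.domRestrict g) :
    (derivSmooth a : Punctured → ℂ) = Punctured.domRestrict (deriv g) := by
  change derivFun a = _
  rw [h, derivFun_domRestrict]

lemma coe_opX (h : (a : Punctured → ℂ) = Punctured.domRestrict g) :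
    (opX derivSmooth coordSmooth a : Punctured → ℂ) = Punctured.domRestrict (calX g) := by
  funext ξ
  have hD := congrFun (coe_derivSmooth h) ξ
  simp only [Set.domRestrict_apply] at hD
  simp only [opX_apply, SetLike.val_smul, MulMemClass.coe_mul, Pi.smul_apply, Pi.mul_apply,
    smul_eq_mul, coordSmooth, hD, calX, Set.domRestrict_apply]
  ring

lemma coe_opK (h : (a : Punctured → ℂ) = Punctured.domRestrict g) :
    (opK derivSmooth coordSmooth a : Punctured → ℂ) = Punctured.domRestrict (xiD2 g) := by
  funext ξ
  have hD := congrFun (coe_derivSmooth (coe_derivSmooth h)) ξ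
  simp only [Set.domRestrict_apply] at hD
  simp [coordSmooth, xiD2, hD]

lemma coe_opU (ν : ℂ) (h : (a : Punctured → ℂ) = Punctured.domRestrict g) :
    (opU derivSmooth coordSmooth invCoordSmooth ν a : Punctured → ℂ) =
      Punctured.domRestrict (calU ν g) := by
  funext ξ
  have hD := congrFun (coe_derivSmooth (coe_derivSmooth h)) ξ
  have hg := congrFun h ξ
  simp only [Set.domRestrict_apply] at hD hg
  simp only [opU_apply, SetLike.val_smul, AddSubgroupClass.coe_sub, MulMemClass.coe_mul,
    Pi.smul_apply, Pi.sub_apply, Pi.mul_apply, smul_eq_mul, coordSmooth, invCoordSmooth, hD, hg,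
    calU, Set.domRestrict_apply]
  ring

lemma coe_pow_apply {T : Module.End ℂ smoothFun} {F : (ℝ → ℂ) → ℝ → ℂ}
    (hT : ∀ {a : smoothFun} {g}, (a : Punctured → ℂ) = Punctured.domRestrict g →
      (T a : Punctured → ℂ) = Punctured.domRestrict (F g))
    (k : ℕ) (h : (a : Punctured → ℂ) = Punctured.domRestrict g) :
    ((T ^ k) a : Punctured → ℂ) = Punctured.domRestrict (F^[k] g) := by
  induction k generalizing a g with
  | zero => exact h
  | succ k ih =>
    rw [pow_succ, Module.End.mul_apply, Function.iterate_succ_apply]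
    exact ih (hT h)

lemma coe_opU_pow_mul_opX_pow (h : (a : Punctured → ℂ) = Punctured.domRestrict g)
    (ν : ℂ) (j k : ℕ) :
    ((opU derivSmooth coordSmooth invCoordSmooth ν ^ j * opX derivSmooth coordSmooth ^ k) a :
      Punctured → ℂ) = Punctured.domRestrict ((calU ν)^[j] (calX^[k] g)) :=
  coe_pow_apply (coe_opU ν) j (coe_pow_apply coe_opX k h)

lemma coe_opK_pow_mul_deriv_pow_mul_opX_pow (h : (a : Punctured → ℂ) = Punctured.domRestrict g)
    (l m n : ℕ) :
    ((opK derivSmooth coordSmooth ^ l * (derivSmooth : Module.End ℂ smoothFun) ^ m *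
      opX derivSmooth coordSmooth ^ n) a : Punctured → ℂ) =
      Punctured.domRestrict (xiD2^[l] (deriv^[m] (calX^[n] g))) :=
  coe_pow_apply coe_opK l (coe_pow_apply coe_derivSmooth m (coe_pow_apply coe_opX n h))

end SmoothFunctions

end CalUX

open CalUX in
/-- Leibniz-type formula for `𝒰^β 𝒳^α` applied to a product: there are coefficients
`b^{(α,β)}_{j,k,l,m,n}`, supported on indices with `j+k+l+n ≤ α+β` and `j+l+m ≤ β`,
such that `𝒰^β 𝒳^α (g₁·g₂) = Σ b · (𝒰^j 𝒳^k g₁) · ((ξ d²/dξ²)^l (d/dξ)^m 𝒳^n g₂)`. -/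
theorem calU_calX_leibniz (α β : ℕ) :
    ∃ b : ℕ → ℕ → ℕ → ℕ → ℕ → ℂ,
      (∀ j k l m n, ¬(j + k + l + n ≤ α + β ∧ j + l + m ≤ β) → b j k l m n = 0) ∧
      ∀ (ν : ℂ) (g₁ g₂ : ℝ → ℂ),
        ContDiffOn ℝ (⊤ : ℕ∞) g₁ {(0 : ℝ)}ᶜ →
        ContDiffOn ℝ (⊤ : ℕ∞) g₂ {(0 : ℝ)}ᶜ →
        ∀ ξ : ℝ, ξ ≠ 0 →
          (calU ν)^[β] (calX^[α] (fun x => g₁ x * g₂ x)) ξ =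
            ∑ j ∈ range (β + 1), ∑ k ∈ range (α + β + 1), ∑ l ∈ range (β + 1),
              ∑ m ∈ range (β + 1), ∑ n ∈ range (α + β + 1),
                b j k l m n * ((calU ν)^[j] (calX^[k] g₁) ξ) *
                  (xiD2^[l] (deriv^[m] (calX^[n] g₂)) ξ) := by
  obtain ⟨b, hb, hexp⟩ := exists_coeffs_of_mem_leibnizSpan
    (opU_pow_mul_opX_pow_mem_leibnizSpan derivSmooth_coordSmooth coordSmooth_mul_invCoordSmooth
      α β)
  refine ⟨b, hb, fun ν g₁ g₂ hg₁ hg₂ ξ hξ => ?_⟩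
  let a₁ : smoothFun := ⟨_, domRestrict_mem_smoothFun hg₁⟩
  let a₂ : smoothFun := ⟨_, domRestrict_mem_smoothFun hg₂⟩
  have h := congrFun (congrArg Subtype.val (hexp ν a₁ a₂)) ⟨ξ, hξ⟩
  have e₀ := coe_opU_pow_mul_opX_pow (a := a₁ * a₂) (g := fun x => g₁ x * g₂ x) rfl ν β α
  have e₁ := coe_opU_pow_mul_opX_pow (a := a₁) (g := g₁) rfl ν
  have e₂ := coe_opK_pow_mul_deriv_pow_mul_opX_pow (a := a₂) (g := g₂) rfl
  simp only [e₀, e₁, e₂, AddSubmonoidClass.coe_finsetSum, SetLike.val_smul, MulMemClass.coe_mul,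
    Finset.sum_apply, Pi.smul_apply, Pi.mul_apply, smul_eq_mul, Set.domRestrict_apply] at h
  simpa only [mul_assoc] using h
end

section
/- For every l, m, n ∈ ℕ there exist complex coefficients c^{(l,m,n)}_{j,k}, indexed by pairs (j,k) of natural numbers with j ≤ l + n, k ≤ 2l + m + n and k − j ≥ l + m, such that as operators on smooth complex-valued functions on ℝ∖{0} one has (ξ·d²/dξ²)^l (d/dξ)^m 𝒳^n = Σ_{j ≤ l+n, k ≤ 2l+m+n, k−j ≥ l+m} c^{(l,m,n)}_{j,k} · ξ^j (d/dξ)^k, where ξ^j (d/dξ)^k sends h to the function ξ ↦ ξ^j·h^{(k)}(ξ). Moreover, the coefficients can be chosen so that whenever (l, m, n) ≠ (0, 0, 0), every index k appearing with a nonzero coefficient satisfies k ≥ 1. -/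
open Complex Finset

noncomputable def SS (c : ℕ → ℕ → ℂ) (J K : ℕ) (h : ℝ → ℂ) (ξ : ℝ) : ℂ :=
  ∑ j ∈ range J, ∑ k ∈ range K, c j k * (ξ : ℂ) ^ j * deriv^[k] h ξ

lemma iter_smooth {h : ℝ → ℂ} (hh : ContDiffOn ℝ (⊤ : ℕ∞) h {(0:ℝ)}ᶜ) (k : ℕ) :
    ContDiffOn ℝ (⊤ : ℕ∞) (deriv^[k] h) {(0:ℝ)}ᶜ := by
  induction k with
  | zero => exact hh
  | succ k ih =>
    rw [Function.iterate_succ_apply']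
    have := (contDiffOn_infty_iff_deriv_of_isOpen (isOpen_compl_singleton : IsOpen {(0:ℝ)}ᶜ)).1 ih
    exact this.2

lemma diff_iter {h : ℝ → ℂ} (hh : ContDiffOn ℝ (⊤ : ℕ∞) h {(0:ℝ)}ᶜ) (k : ℕ) {ξ : ℝ}
    (hξ : ξ ≠ 0) : DifferentiableAt ℝ (deriv^[k] h) ξ := by
  have := (contDiffOn_infty_iff_deriv_of_isOpen (isOpen_compl_singleton : IsOpen {(0:ℝ)}ᶜ)).1
    (iter_smooth hh k)
  exact (this.1 ξ hξ).differentiableAt (isOpen_compl_singleton.mem_nhds hξ)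

lemma term_hasDerivAt {h : ℝ → ℂ} (hh : ContDiffOn ℝ (⊤ : ℕ∞) h {(0:ℝ)}ᶜ)
    (a : ℂ) (j k : ℕ) {ξ : ℝ} (hξ : ξ ≠ 0) :
    HasDerivAt (fun x : ℝ => a * (x : ℂ) ^ j * deriv^[k] h x)
      (a * ((j : ℂ) * (ξ:ℂ) ^ (j - 1)) * deriv^[k] h ξ + a * (ξ:ℂ) ^ j * deriv^[k+1] h ξ) ξ := by
  have h1 : HasDerivAt (fun x : ℝ => (x : ℂ) ^ j) ((j : ℂ) * (ξ:ℂ) ^ (j - 1)) ξ :=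
    (hasDerivAt_pow j ((ξ:ℝ):ℂ)).comp_ofReal
  have h2 : HasDerivAt (fun x : ℝ => a * (x : ℂ) ^ j) (a * ((j : ℂ) * (ξ:ℂ) ^ (j - 1))) ξ :=
    h1.const_mul a
  have h3 : HasDerivAt (deriv^[k] h) (deriv^[k+1] h ξ) ξ := by
    have := (diff_iter hh k hξ).hasDerivAt
    rwa [Function.iterate_succ_apply']
  exact h2.mul h3

noncomputable def Dc (c : ℕ → ℕ → ℂ) : ℕ → ℕ → ℂ :=
  fun j k => ((j:ℂ)+1) * c (j+1) k + (if k = 0 then 0 else c j (k-1))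

noncomputable def Mc (c : ℕ → ℕ → ℂ) : ℕ → ℕ → ℂ :=
  fun j k => if j = 0 then 0 else c (j-1) k

lemma Dc_supp {c : ℕ → ℕ → ℂ} {J K : ℕ} (hc : ∀ j k, c j k ≠ 0 → j < J ∧ k < K) :
    ∀ j k, Dc c j k ≠ 0 → j < J ∧ k < K + 1 := by
  intro j k hne
  unfold Dc at hne
  rcases eq_or_ne (c (j+1) k) 0 with h1 | h1
  · rcases eq_or_ne k 0 with rfl | hk
    · simp [h1] at hne
    · simp only [h1, mul_zero, zero_add, if_neg hk] at hne
      obtain ⟨a, b⟩ := hc j (k-1) hne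
      exact ⟨a, by omega⟩
  · obtain ⟨a, b⟩ := hc (j+1) k h1
    exact ⟨by omega, by omega⟩

lemma Mc_supp {c : ℕ → ℕ → ℂ} {J K : ℕ} (hc : ∀ j k, c j k ≠ 0 → j < J ∧ k < K) :
    ∀ j k, Mc c j k ≠ 0 → j < J + 1 ∧ k < K := by
  intro j k hne
  unfold Mc at hne
  rcases eq_or_ne j 0 with rfl | hj
  · simp at hne
  · rw [if_neg hj] at hne
    obtain ⟨a, b⟩ := hc (j-1) k hne
    exact ⟨by omega, b⟩

lemma D_step {c : ℕ → ℕ → ℂ} {J K : ℕ} (hc : ∀ j k, c j k ≠ 0 → j < J ∧ k < K)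
    {h g : ℝ → ℂ} (hh : ContDiffOn ℝ (⊤ : ℕ∞) h {(0:ℝ)}ᶜ)
    (hg : ∀ x : ℝ, x ≠ 0 → g x = SS c J K h x) :
    ∀ x : ℝ, x ≠ 0 → deriv g x = SS (Dc c) J (K+1) h x := by
  intro ξ hξ
  have hev : g =ᶠ[nhds ξ] fun x => SS c J K h x := by
    filter_upwards [isOpen_compl_singleton.mem_nhds (by exact hξ : ξ ∈ {(0:ℝ)}ᶜ)] with x hx
    exact hg x hx
  rw [hev.deriv_eq]
  -- derivative of the double sum
  have hd : deriv (fun x => SS c J K h x) ξ =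
      ∑ j ∈ range J, ∑ k ∈ range K,
        (c j k * ((j : ℂ) * (ξ:ℂ) ^ (j - 1)) * deriv^[k] h ξ
          + c j k * (ξ:ℂ) ^ j * deriv^[k+1] h ξ) := by
    have : ∀ x : ℝ, SS c J K h x = ∑ p ∈ range J ×ˢ range K,
        c p.1 p.2 * (x : ℂ) ^ p.1 * deriv^[p.2] h x := by
      intro x; rw [SS, Finset.sum_product]
    simp only [this]
    rw [deriv_fun_sum (fun p _ => (term_hasDerivAt hh (c p.1 p.2) p.1 p.2 hξ).differentiableAt)]
    rw [Finset.sum_product]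
    refine Finset.sum_congr rfl fun j _ => Finset.sum_congr rfl fun k _ => ?_
    exact (term_hasDerivAt hh (c j k) j k hξ).deriv
  rw [hd]
  -- algebra: reindex
  have expand : SS (Dc c) J (K+1) h ξ =
      (∑ j ∈ range J, ∑ k ∈ range (K+1), ((j:ℂ)+1) * c (j+1) k * (ξ:ℂ)^j * deriv^[k] h ξ)
      + ∑ j ∈ range J, ∑ k ∈ range (K+1),
          (if k = 0 then 0 else c j (k-1)) * (ξ:ℂ)^j * deriv^[k] h ξ := by
    rw [SS, ← Finset.sum_add_distrib]
    refine Finset.sum_congr rfl fun j _ => ?_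
    rw [← Finset.sum_add_distrib]
    refine Finset.sum_congr rfl fun k _ => ?_
    rw [Dc]; ring
  rw [expand]
  have T1 : (∑ j ∈ range J, ∑ k ∈ range (K+1), ((j:ℂ)+1) * c (j+1) k * (ξ:ℂ)^j * deriv^[k] h ξ)
      = ∑ j ∈ range J, ∑ k ∈ range K, c j k * ((j : ℂ) * (ξ:ℂ) ^ (j - 1)) * deriv^[k] h ξ := by
    -- shrink k range, then shift j
    have shrink : ∀ j : ℕ, (∑ k ∈ range (K+1), ((j:ℂ)+1) * c (j+1) k * (ξ:ℂ)^j * deriv^[k] h ξ)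
        = ∑ k ∈ range K, ((j:ℂ)+1) * c (j+1) k * (ξ:ℂ)^j * deriv^[k] h ξ := by
      intro j
      rw [Finset.sum_range_succ]
      have : c (j+1) K = 0 := by
        by_contra hne; exact absurd (hc _ _ hne).2 (lt_irrefl K)
      simp [this]
    simp only [shrink]
    -- now shift the j index on the RHS
    have ext : (∑ j ∈ range J, ∑ k ∈ range K,
        c j k * ((j : ℂ) * (ξ:ℂ) ^ (j - 1)) * deriv^[k] h ξ)
        = ∑ j ∈ range (J+1), ∑ k ∈ range K,
        c j k * ((j : ℂ) * (ξ:ℂ) ^ (j - 1)) * deriv^[k] h ξ := by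
      rw [Finset.sum_range_succ]
      have : ∀ k, c J k = 0 := fun k => by
        by_contra hne; exact absurd (hc _ _ hne).1 (lt_irrefl J)
      simp [this]
    rw [ext, Finset.sum_range_succ']
    simp only [Nat.cast_zero, zero_mul, mul_zero, zero_mul, Finset.sum_const_zero, add_zero,
      Nat.add_sub_cancel, Nat.cast_add, Nat.cast_one]
    refine Finset.sum_congr rfl fun j _ => Finset.sum_congr rfl fun k _ => ?_
    ring
  have T2 : (∑ j ∈ range J, ∑ k ∈ range (K+1),
        (if k = 0 then 0 else c j (k-1)) * (ξ:ℂ)^j * deriv^[k] h ξ)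
      = ∑ j ∈ range J, ∑ k ∈ range K, c j k * (ξ:ℂ)^j * deriv^[k+1] h ξ := by
    refine Finset.sum_congr rfl fun j _ => ?_
    rw [Finset.sum_range_succ']
    simp
  rw [T1, T2, ← Finset.sum_add_distrib]
  refine Finset.sum_congr rfl fun j _ => ?_
  rw [← Finset.sum_add_distrib]

lemma M_step (c : ℕ → ℕ → ℂ) (J K : ℕ) (h : ℝ → ℂ) (ξ : ℝ) :
    (ξ:ℂ) * SS c J K h ξ = SS (Mc c) (J+1) K h ξ := by
  rw [SS, SS, Finset.sum_range_succ', Finset.mul_sum]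
  have h0 : ∀ k, Mc c 0 k = 0 := fun k => if_pos rfl
  have h1 : ∀ j k, Mc c (j+1) k = c j k := fun j k => by simp [Mc]
  simp only [h0, h1, zero_mul, Finset.sum_const_zero, add_zero]
  refine Finset.sum_congr rfl fun j _ => ?_
  rw [Finset.mul_sum]
  refine Finset.sum_congr rfl fun k _ => ?_
  ring

lemma scale_SS (a : ℂ) (c : ℕ → ℕ → ℂ) (J K : ℕ) (h : ℝ → ℂ) (ξ : ℝ) :
    a * SS c J K h ξ = SS (fun j k => a * c j k) J K h ξ := by
  rw [SS, SS, Finset.mul_sum]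
  refine Finset.sum_congr rfl fun j _ => ?_
  rw [Finset.mul_sum]
  refine Finset.sum_congr rfl fun k _ => ?_
  ring

lemma Dc_nz {c : ℕ → ℕ → ℂ} {j k : ℕ} (hne : Dc c j k ≠ 0) :
    c (j+1) k ≠ 0 ∨ (1 ≤ k ∧ c j (k-1) ≠ 0) := by
  by_contra hcon
  push_neg at hcon
  obtain ⟨h1, h2⟩ := hcon
  apply hne
  rw [Dc, h1, mul_zero, zero_add]
  rcases eq_or_ne k 0 with rfl | hk
  · simp
  · rw [if_neg hk]
    exact h2 (by omega)

lemma Mc_nz {c : ℕ → ℕ → ℂ} {j k : ℕ} (hne : Mc c j k ≠ 0) :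
    1 ≤ j ∧ c (j-1) k ≠ 0 := by
  rcases eq_or_ne j 0 with rfl | hj
  · simp [Mc] at hne
  · rw [Mc, if_neg hj] at hne
    exact ⟨by omega, hne⟩

lemma main_n (n : ℕ) : ∃ c : ℕ → ℕ → ℂ,
    (∀ j k, c j k ≠ 0 → j ≤ n ∧ k ≤ n ∧ j ≤ k) ∧
    (n ≠ 0 → ∀ j, c j 0 = 0) ∧
    ∀ h : ℝ → ℂ, ContDiffOn ℝ (⊤ : ℕ∞) h {(0:ℝ)}ᶜ → ∀ ξ : ℝ, ξ ≠ 0 →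
      calX^[n] h ξ = SS c (n+1) (n+1) h ξ := by
  induction n with
  | zero =>
    refine ⟨fun j k => if j = 0 ∧ k = 0 then 1 else 0, ?_, ?_, ?_⟩
    · intro j k hne
      by_contra hcon
      apply hne
      show (if j = 0 ∧ k = 0 then (1:ℂ) else 0) = 0
      rw [if_neg]
      rintro ⟨rfl, rfl⟩
      exact hcon ⟨le_refl _, le_refl _, le_refl _⟩
    · intro h0; exact absurd rfl h0
    · intro h hh ξ hξ
      simp [SS]
  | succ n ih =>
    obtain ⟨c, hsupp, h0, hpt⟩ := ih
    have hsupp' : ∀ j k, c j k ≠ 0 → j < n+1 ∧ k < n+1 := by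
      intro j k hne; obtain ⟨a, b, _⟩ := hsupp j k hne; omega
    refine ⟨fun j k => -2 * Mc (Dc c) j k, ?_, ?_, ?_⟩
    · intro j k hne
      have hne' : Mc (Dc c) j k ≠ 0 := by
        intro hz; apply hne; show -2 * Mc (Dc c) j k = 0; rw [hz, mul_zero]
      obtain ⟨hj1, hd⟩ := Mc_nz hne'
      rcases Dc_nz hd with h1 | ⟨hk1, h2⟩
      · obtain ⟨a, b, e⟩ := hsupp _ _ h1
        refine ⟨by omega, by omega, by omega⟩
      · obtain ⟨a, b, e⟩ := hsupp _ _ h2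
        refine ⟨by omega, by omega, by omega⟩
    · intro _ j
      show -2 * Mc (Dc c) j 0 = 0
      rcases eq_or_ne (Mc (Dc c) j 0) 0 with hz | hne'
      · rw [hz, mul_zero]
      · exfalso
        obtain ⟨hj1, hd⟩ := Mc_nz hne'
        rcases Dc_nz hd with h1 | ⟨hk1, _⟩
        · obtain ⟨_, _, e⟩ := hsupp _ _ h1; omega
        · omega
    · intro h hh ξ hξ
      rw [Function.iterate_succ_apply']
      have hder := D_step hsupp' hh (hpt h hh)
      show -2 * (ξ:ℂ) * deriv (calX^[n] h) ξ = _
      rw [hder ξ hξ, mul_assoc, M_step, scale_SS]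

lemma main_m (m n : ℕ) : ∃ c : ℕ → ℕ → ℂ,
    (∀ j k, c j k ≠ 0 → j ≤ n ∧ k ≤ m + n ∧ m + j ≤ k) ∧
    ((m ≠ 0 ∨ n ≠ 0) → ∀ j k, c j k ≠ 0 → 1 ≤ k) ∧
    ∀ h : ℝ → ℂ, ContDiffOn ℝ (⊤ : ℕ∞) h {(0:ℝ)}ᶜ → ∀ ξ : ℝ, ξ ≠ 0 →
      deriv^[m] (calX^[n] h) ξ = SS c (n+1) (m+n+1) h ξ := by
  induction m with
  | zero =>
    obtain ⟨c, hsupp, h0, hpt⟩ := main_n n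
    refine ⟨c, ?_, ?_, ?_⟩
    · intro j k hne; obtain ⟨a, b, e⟩ := hsupp j k hne; exact ⟨a, by omega, by omega⟩
    · rintro (h | hn) j k hne
      · exact absurd rfl h
      · by_contra hk
        have hk0 : k = 0 := by omega
        rw [hk0] at hne
        exact hne (h0 hn j)
    · intro h hh ξ hξ
      simpa using hpt h hh ξ hξ
  | succ m ih =>
    obtain ⟨c, hsupp, _, hpt⟩ := ih
    have hsupp' : ∀ j k, c j k ≠ 0 → j < n+1 ∧ k < m+n+1 := by
      intro j k hne; obtain ⟨a, b, _⟩ := hsupp j k hne; omega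
    refine ⟨Dc c, ?_, ?_, ?_⟩
    · intro j k hne
      rcases Dc_nz hne with h1 | ⟨hk1, h2⟩
      · obtain ⟨a, b, e⟩ := hsupp _ _ h1; exact ⟨by omega, by omega, by omega⟩
      · obtain ⟨a, b, e⟩ := hsupp _ _ h2; exact ⟨by omega, by omega, by omega⟩
    · intro _ j k hne
      rcases Dc_nz hne with h1 | ⟨hk1, h2⟩
      · obtain ⟨_, _, e⟩ := hsupp _ _ h1; omega
      · omega
    · intro h hh ξ hξ
      rw [Function.iterate_succ_apply']
      have hder := D_step hsupp' hh (hpt h hh)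
      have := hder ξ hξ
      rw [this]
      congr 1
      omega

lemma main_l (l m n : ℕ) : ∃ c : ℕ → ℕ → ℂ,
    (∀ j k, c j k ≠ 0 → j ≤ l + n ∧ k ≤ 2 * l + m + n ∧ l + m + j ≤ k) ∧
    ((l ≠ 0 ∨ m ≠ 0 ∨ n ≠ 0) → ∀ j k, c j k ≠ 0 → 1 ≤ k) ∧
    ∀ h : ℝ → ℂ, ContDiffOn ℝ (⊤ : ℕ∞) h {(0:ℝ)}ᶜ → ∀ ξ : ℝ, ξ ≠ 0 →
      xiD2^[l] (deriv^[m] (calX^[n] h)) ξ = SS c (l + n + 1) (2 * l + m + n + 1) h ξ := by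
  induction l with
  | zero =>
    obtain ⟨c, hsupp, h1, hpt⟩ := main_m m n
    refine ⟨c, ?_, ?_, ?_⟩
    · intro j k hne; obtain ⟨a, b, e⟩ := hsupp j k hne
      exact ⟨by omega, by omega, by omega⟩
    · rintro (h | h | h) j k hne
      · exact absurd rfl h
      · exact h1 (Or.inl h) j k hne
      · exact h1 (Or.inr h) j k hne
    · intro h hh ξ hξ
      have := hpt h hh ξ hξ
      simp only [Function.iterate_zero_apply]
      rw [this]
      congr 1 <;> omega
  | succ l ih =>
    obtain ⟨c, hsupp, _, hpt⟩ := ih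
    have hsupp1 : ∀ j k, c j k ≠ 0 → j < l + n + 1 ∧ k < 2 * l + m + n + 1 := by
      intro j k hne; obtain ⟨a, b, _⟩ := hsupp j k hne; omega
    have hsupp2 : ∀ j k, Dc c j k ≠ 0 → j < l + n + 1 ∧ k < 2 * l + m + n + 2 :=
      Dc_supp hsupp1
    refine ⟨Mc (Dc (Dc c)), ?_, ?_, ?_⟩
    · intro j k hne
      obtain ⟨hj1, hd⟩ := Mc_nz hne
      have key : ∀ j' k', Dc (Dc c) j' k' ≠ 0 → j' ≤ l + n ∧ k' ≤ 2*l+m+n+2 ∧ l+m+2+j' ≤ k' := by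
        intro j' k' hne'
        rcases Dc_nz hne' with hq | ⟨hk1, hq⟩ <;>
        · rcases Dc_nz hq with hr | ⟨hk2, hr⟩ <;>
          · obtain ⟨a, b, e⟩ := hsupp _ _ hr
            refine ⟨by omega, by omega, by omega⟩
      obtain ⟨a, b, e⟩ := key _ _ hd
      exact ⟨by omega, by omega, by omega⟩
    · intro _ j k hne
      obtain ⟨hj1, hd⟩ := Mc_nz hne
      rcases Dc_nz hd with hq | ⟨hk1, hq⟩
      · rcases Dc_nz hq with hr | ⟨hk2, hr⟩
        · obtain ⟨_, _, e⟩ := hsupp _ _ hr; omega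
        · omega
      · omega
    · intro h hh ξ hξ
      rw [Function.iterate_succ_apply']
      have hd1 := D_step hsupp1 hh (hpt h hh)
      have hd2 := D_step hsupp2 hh hd1
      show (ξ:ℂ) * deriv (deriv (xiD2^[l] (deriv^[m] (calX^[n] h)))) ξ = _
      rw [hd2 ξ hξ, M_step]
      congr 1 <;> omega

/-- The operator `(ξ·d²/dξ²)^l (d/dξ)^m 𝒳^n` decomposes as a combination
`Σ c_{j,k} ξ^j (d/dξ)^k` with `j ≤ l+n`, `k ≤ 2l+m+n`, `k−j ≥ l+m`; moreover, when
`(l,m,n) ≠ (0,0,0)` the coefficients can be chosen so that only indices `k ≥ 1` occur. -/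
theorem xiD2_deriv_calX_decomposition (l m n : ℕ) :
    ∃ c : ℕ → ℕ → ℂ,
      (∀ j k, ¬(j ≤ l + n ∧ k ≤ 2 * l + m + n ∧ l + m + j ≤ k) → c j k = 0) ∧
      ((l, m, n) ≠ (0, 0, 0) → ∀ j k, c j k ≠ 0 → 1 ≤ k) ∧
      ∀ h : ℝ → ℂ, ContDiffOn ℝ (⊤ : ℕ∞) h {(0 : ℝ)}ᶜ →
        ∀ ξ : ℝ, ξ ≠ 0 →
          xiD2^[l] (deriv^[m] (calX^[n] h)) ξ =
            ∑ j ∈ range (l + n + 1), ∑ k ∈ range (2 * l + m + n + 1),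
              c j k * (ξ : ℂ) ^ j * deriv^[k] h ξ := by
  obtain ⟨c, hsupp, h1, hpt⟩ := main_l l m n
  refine ⟨c, ?_, ?_, hpt⟩
  · intro j k hn
    by_contra hne
    exact hn (hsupp j k hne)
  · intro hne
    apply h1
    by_contra hcon
    push_neg at hcon
    exact hne (by simp [Prod.ext_iff, hcon.1, hcon.2.1, hcon.2.2])
end

section
/- For every α, β ∈ ℕ there is a constant C > 0, depending only on α and β, such that the following holds. Let ν ∈ ℂ, let λ be a nonzero real number, let g : ℝ∖{0} → ℂ be smooth, and define f(ξ) = (i/λ)·g(ξ)/(ξ − 1) for ξ ∈ ℝ∖{0} with ξ ≠ 1. Then, with I = [1/2, 3/2], ‖𝒰^β 𝒳^α f‖_{𝕃²(ℝ∖I)} ≤ (C/|λ|) · Σ_{j+k ≤ α+β, j ≤ β} ‖𝒰^j 𝒳^k g‖_{𝕃²(ℝ)}, provided the right-hand side is finite. -/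
/-!
Write `f = (i/λ) · m g` with `m(ξ) = (ξ - 1)⁻¹`. The Leibniz rules
`𝒳(b h) = (𝒳 b) h + b 𝒳 h`, `𝒰(b h) = b 𝒰 h + i b' 𝒳 h - i ξ b'' h` and the commutation relation
`𝒳 𝒰 = 𝒰 𝒳 + 2 𝒰` show, by induction, that off `{0, 1}` the function `𝒰^β 𝒳^α (m g)` equals
`∑ b_{jk} 𝒰^j 𝒳^k g` over `j ≤ β`, `j + k ≤ α + β`, with coefficients `b_{jk}` that are
polynomials in `(ξ - 1)⁻¹` and depend neither on `g` nor on `ν`. Off `I` we have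
`|ξ - 1| ≥ 1/2`, so these coefficients are bounded there, uniformly in `g` and `ν`; the pointwise
bound then passes to `L²(|ξ|⁻¹ dξ)` by Minkowski's inequality.
-/

open Complex Finset MeasureTheory

/-- The norm of `L²(J, |ξ|⁻¹ dξ)`, valued in `ℝ≥0∞`. -/
noncomputable def L2w (h : ℝ → ℂ) (J : Set ℝ) : ENNReal :=
  (∫⁻ ξ in J, ENNReal.ofReal (‖h ξ‖ ^ 2) / ENNReal.ofReal |ξ|) ^ (1 / 2 : ℝ)

open Polynomial
open scoped ContDiff Topology

lemma ofReal_sub_one_ne_zero {x : ℝ} (hx : x ≠ 1) : (x : ℂ) - 1 ≠ 0 :=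
  sub_ne_zero.2 (mod_cast hx)

lemma hasDerivAt_eval_inv_sub_one (φ : ℂ[X]) {x : ℝ} (hx : x ≠ 1) :
    HasDerivAt (fun ξ : ℝ => φ.eval ((ξ : ℂ) - 1)⁻¹)
      ((-X ^ 2 * derivative φ).eval ((x : ℂ) - 1)⁻¹) x := by
  have hinv : HasDerivAt (fun z : ℂ => (z - 1)⁻¹) (-1 / ((x : ℂ) - 1) ^ 2) x :=
    ((hasDerivAt_id (x : ℂ)).sub_const 1).inv (ofReal_sub_one_ne_zero hx)
  refine (((φ.hasDerivAt _).comp (x : ℂ) hinv).comp_ofReal).congr_deriv ?_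
  simp only [eval_mul, eval_neg, eval_pow, eval_X, inv_pow]
  ring

def polyInvSubOne : Submodule ℂ (ℝ → ℂ) where
  carrier := {b | ∃ φ : ℂ[X], ∀ x : ℝ, x ≠ 1 → b x = φ.eval ((x : ℂ) - 1)⁻¹}
  add_mem' := by
    rintro b₁ b₂ ⟨φ₁, h₁⟩ ⟨φ₂, h₂⟩
    exact ⟨φ₁ + φ₂, fun x hx => by simp [h₁ x hx, h₂ x hx]⟩
  zero_mem' := ⟨0, by simp⟩
  smul_mem' := by
    rintro c b ⟨φ, h⟩
    exact ⟨C c * φ, fun x hx => by simp [h x hx]⟩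

namespace polyInvSubOne

variable {b : ℝ → ℂ} {φ : ℂ[X]} {x : ℝ}

lemma hasDerivAt_of_eqOn (hb : ∀ y : ℝ, y ≠ 1 → b y = φ.eval ((y : ℂ) - 1)⁻¹) (hx : x ≠ 1) :
    HasDerivAt b ((-X ^ 2 * derivative φ).eval ((x : ℂ) - 1)⁻¹) x :=
  (hasDerivAt_eval_inv_sub_one φ hx).congr_of_eventuallyEq ((eventually_ne_nhds hx).mono hb)

lemma hasDerivAt_deriv (hb : b ∈ polyInvSubOne) (hx : x ≠ 1) : HasDerivAt b (deriv b x) x :=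
  let ⟨_, hφ⟩ := hb
  (hasDerivAt_of_eqOn hφ hx).differentiableAt.hasDerivAt

lemma deriv_mem (hb : b ∈ polyInvSubOne) : deriv b ∈ polyInvSubOne :=
  let ⟨_, hφ⟩ := hb
  ⟨_, fun _ hx => (hasDerivAt_of_eqOn hφ hx).deriv⟩

lemma ofReal_mul_deriv_mem (hb : b ∈ polyInvSubOne) :
    (fun x : ℝ => (x : ℂ) * deriv b x) ∈ polyInvSubOne := by
  obtain ⟨φ, hφ⟩ := hb
  refine ⟨-(X ^ 2 + X) * derivative φ, fun x hx => ?_⟩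
  have hx' := ofReal_sub_one_ne_zero hx
  show (x : ℂ) * deriv b x = _
  rw [(hasDerivAt_of_eqOn hφ hx).deriv]
  simp only [eval_mul, eval_neg, eval_add, eval_pow, eval_X]
  field_simp
  ring

lemma calX_mem (hb : b ∈ polyInvSubOne) : calX b ∈ polyInvSubOne := by
  have : calX b = (-2 : ℂ) • fun x : ℝ => (x : ℂ) * deriv b x := by
    ext x
    simp [calX, mul_assoc]
  exact this ▸ Submodule.smul_mem _ _ (ofReal_mul_deriv_mem hb)

lemma contDiffOn (hb : b ∈ polyInvSubOne) : ContDiffOn ℝ ∞ b {1}ᶜ := by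
  obtain ⟨φ, hφ⟩ := hb
  have hinv : ContDiffOn ℝ ∞ (fun ξ : ℝ => ((ξ : ℂ) - 1)⁻¹) {1}ᶜ :=
    (ofRealCLM.contDiff.sub contDiff_const).contDiffOn.inv fun x hx => ofReal_sub_one_ne_zero hx
  refine (((contDiff_aeval φ ∞).restrict_scalars ℝ).comp_contDiffOn hinv).congr fun x hx => ?_
  simpa using hφ x hx

lemma exists_bound (hb : b ∈ polyInvSubOne) :
    ∃ C, 0 ≤ C ∧ ∀ x ∉ Set.Icc (1 / 2 : ℝ) (3 / 2), ‖b x‖ ≤ C := by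
  obtain ⟨φ, hφ⟩ := hb
  obtain ⟨C, hC⟩ :=
    (isCompact_closedBall (0 : ℂ) 2).exists_bound_of_continuousOn φ.continuous.continuousOn
  refine ⟨max C 0, le_max_right _ _, fun x hx => ?_⟩
  have hx1 : x ≠ 1 := by rintro rfl; norm_num at hx
  have hdist : (1 / 2 : ℝ) ≤ ‖(x : ℂ) - 1‖ := by
    rw [← ofReal_one, ← ofReal_sub, norm_real, Real.norm_eq_abs, le_abs]
    rw [Set.mem_Icc, not_and_or, not_le, not_le] at hx
    rcases hx with h | h
    · right; linarith
    · left; linarith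
  rw [hφ x hx1]
  refine (hC _ ?_).trans (le_max_left _ _)
  rw [mem_closedBall_zero_iff, norm_inv]
  calc ‖(x : ℂ) - 1‖⁻¹ ≤ (1 / 2 : ℝ)⁻¹ := inv_anti₀ (by norm_num) hdist
    _ = 2 := by norm_num

end polyInvSubOne
section Operators

variable {U : Set ℝ} {F G b h : ℝ → ℂ} {ν : ℂ} {x : ℝ}

lemma ContDiffOn.hasDerivAt_deriv (hF : ContDiffOn ℝ ∞ F U) (hU : IsOpen U) (hx : x ∈ U) :
    HasDerivAt F (deriv F x) x :=
  ((hF.differentiableOn (by simp)).differentiableAt (hU.mem_nhds hx)).hasDerivAt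

lemma ContDiffOn.deriv_infty (hF : ContDiffOn ℝ ∞ F U) (hU : IsOpen U) :
    ContDiffOn ℝ ∞ (deriv F) U :=
  ((contDiffOn_infty_iff_deriv_of_isOpen hU).1 hF).2

lemma contDiffOn_calX (hF : ContDiffOn ℝ ∞ F U) (hU : IsOpen U) : ContDiffOn ℝ ∞ (calX F) U :=
  (contDiffOn_const.mul ofRealCLM.contDiff.contDiffOn).mul (hF.deriv_infty hU)

lemma contDiffOn_calU (hF : ContDiffOn ℝ ∞ F U) (hU : IsOpen U) (h0 : (0 : ℝ) ∉ U) :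
    ContDiffOn ℝ ∞ (calU ν F) U := by
  have hq : ContDiffOn ℝ ∞ (fun ξ : ℝ => (ν ^ 2 - 1) / (4 * (ξ : ℂ))) U := by
    simp_rw [div_eq_mul_inv]
    exact contDiffOn_const.mul ((contDiffOn_const.mul ofRealCLM.contDiff.contDiffOn).inv
      fun ξ hξ => mul_ne_zero (by norm_num) (ofReal_ne_zero.2 (ne_of_mem_of_not_mem hξ h0)))
  exact contDiffOn_const.mul ((hq.mul hF).sub
    (ofRealCLM.contDiff.contDiffOn.mul ((hF.deriv_infty hU).deriv_infty hU)))

lemma contDiffOn_iterate_calU (hF : ContDiffOn ℝ ∞ F U) (hU : IsOpen U) (h0 : (0 : ℝ) ∉ U)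
    (n : ℕ) : ContDiffOn ℝ ∞ ((calU ν)^[n] F) U := by
  induction n with
  | zero => exact hF
  | succ n ih => exact Function.iterate_succ_apply' (calU ν) n F ▸ contDiffOn_calU ih hU h0

lemma contDiffOn_iterate_calX (hF : ContDiffOn ℝ ∞ F U) (hU : IsOpen U) (n : ℕ) :
    ContDiffOn ℝ ∞ (calX^[n] F) U := by
  induction n with
  | zero => exact hF
  | succ n ih => exact Function.iterate_succ_apply' calX n F ▸ contDiffOn_calX ih hU

lemma calX_smul (c : ℂ) (F : ℝ → ℂ) : calX (c • F) = c • calX F := by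
  ext ξ
  simp only [calX, deriv_const_smul_field, Pi.smul_apply, smul_eq_mul]
  ring

lemma calU_smul (ν c : ℂ) (F : ℝ → ℂ) : calU ν (c • F) = c • calU ν F := by
  have hd : deriv (c • F) = c • deriv F := funext fun _ => deriv_const_smul_field c F
  ext ξ
  simp only [calU, hd, deriv_const_smul_field, Pi.smul_apply, smul_eq_mul]
  ring

lemma iterate_calU_iterate_calX_smul (ν c : ℂ) (α β : ℕ) (F : ℝ → ℂ) :
    (calU ν)^[β] (calX^[α] (c • F)) = c • (calU ν)^[β] (calX^[α] F) := by
  have hX : Function.Commute (c • ·) calX := fun F => (calX_smul c F).symm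
  have hU : Function.Commute (c • ·) (calU ν) := fun F => (calU_smul ν c F).symm
  rw [← hX.iterate_right α F, ← hU.iterate_right β]

lemma calX_congr (hFG : F =ᶠ[𝓝 x] G) : calX F x = calX G x := by
  simp only [calX, hFG.deriv_eq]

lemma calU_congr (hFG : F =ᶠ[𝓝 x] G) : calU ν F x = calU ν G x := by
  simp only [calU, hFG.eq_of_nhds, hFG.deriv.deriv_eq]

lemma Set.EqOn.calX (hFG : Set.EqOn F G U) (hU : IsOpen U) : Set.EqOn (calX F) (calX G) U :=
  fun _ hx => calX_congr (hFG.eventuallyEq_of_mem (hU.mem_nhds hx))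

lemma Set.EqOn.iterate_calU (hFG : Set.EqOn F G U) (hU : IsOpen U) (n : ℕ) :
    Set.EqOn ((calU ν)^[n] F) ((calU ν)^[n] G) U := by
  induction n with
  | zero => exact hFG
  | succ n ih =>
    intro x hx
    simp only [Function.iterate_succ_apply']
    exact calU_congr (ih.eventuallyEq_of_mem (hU.mem_nhds hx))

lemma calX_sum_apply {ι : Type*} {s : Finset ι} {F : ι → ℝ → ℂ}
    (hF : ∀ i ∈ s, DifferentiableAt ℝ (F i) x) :
    calX (∑ i ∈ s, F i) x = ∑ i ∈ s, calX (F i) x := by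
  simp only [calX, deriv_sum hF, mul_sum]

lemma calU_sum_apply {ι : Type*} {s : Finset ι} {F : ι → ℝ → ℂ}
    (hF : ∀ i ∈ s, ContDiffOn ℝ ∞ (F i) U) (hU : IsOpen U) (hx : x ∈ U) :
    calU ν (∑ i ∈ s, F i) x = ∑ i ∈ s, calU ν (F i) x := by
  have hd : deriv (∑ i ∈ s, F i) =ᶠ[𝓝 x] ∑ i ∈ s, deriv (F i) :=
    Filter.eventually_of_mem (hU.mem_nhds hx) fun y hy => by
      rw [deriv_sum fun i hi => ((hF i hi).hasDerivAt_deriv hU hy).differentiableAt,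
        Finset.sum_apply]
  rw [calU, hd.deriv_eq, deriv_sum fun i hi =>
    (((hF i hi).deriv_infty hU).hasDerivAt_deriv hU hx).differentiableAt]
  simp only [calU, Finset.sum_apply, mul_sum, ← sum_sub_distrib]

lemma calU_add_apply (hF : ContDiffOn ℝ ∞ F U) (hG : ContDiffOn ℝ ∞ G U) (hU : IsOpen U)
    (hx : x ∈ U) : calU ν (F + G) x = calU ν F x + calU ν G x := by
  simpa using calU_sum_apply (s := Finset.univ) (F := ![F, G]) (by simp [hF, hG]) hU hx

lemma calX_mul_apply (hb : DifferentiableAt ℝ b x) (hh : DifferentiableAt ℝ h x) :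
    calX (b * h) x = calX b x * h x + b x * calX h x := by
  simp only [calX, deriv_mul hb hh]
  ring

lemma calU_mul_apply (hb : ContDiffOn ℝ ∞ b U) (hh : ContDiffOn ℝ ∞ h U) (hU : IsOpen U)
    (hx : x ∈ U) :
    calU ν (b * h) x = b x * calU ν h x + I * deriv b x * calX h x
      - I * x * deriv (deriv b) x * h x := by
  have hd : deriv (b * h) =ᶠ[𝓝 x] deriv b * h + b * deriv h :=
    Filter.eventually_of_mem (hU.mem_nhds hx) fun y hy =>
      deriv_mul ((hb.hasDerivAt_deriv hU hy).differentiableAt)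
        ((hh.hasDerivAt_deriv hU hy).differentiableAt)
  have hdd := (((hb.deriv_infty hU).hasDerivAt_deriv hU hx).mul (hh.hasDerivAt_deriv hU hx)).add
    ((hb.hasDerivAt_deriv hU hx).mul ((hh.deriv_infty hU).hasDerivAt_deriv hU hx))
  rw [calU, hd.deriv_eq, hdd.deriv]
  simp only [calU, calX, Pi.mul_apply]
  ring

end Operators

section Commutator

variable {U : Set ℝ} {h : ℝ → ℂ} {ν : ℂ} {x : ℝ}

lemma calX_calU_apply (hh : ContDiffOn ℝ ∞ h U) (hU : IsOpen U) (hx : x ∈ U) (hx0 : x ≠ 0) :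
    calX (calU ν h) x = calU ν (calX h) x + 2 * calU ν h x := by
  have hx0' : (x : ℂ) ≠ 0 := ofReal_ne_zero.2 hx0
  have hid (y : ℝ) : HasDerivAt (fun ξ : ℝ => (ξ : ℂ)) 1 y := (hasDerivAt_id y).ofReal_comp
  have hh' := hh.deriv_infty hU
  have hh'' := hh'.deriv_infty hU
  have hq : HasDerivAt (fun ξ : ℝ => (ν ^ 2 - 1) / (4 * (ξ : ℂ)))
      (-(ν ^ 2 - 1) / (4 * x ^ 2)) x :=
    ((hasDerivAt_const x (ν ^ 2 - 1)).div ((hid x).const_mul 4)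
      (by simpa using hx0')).congr_deriv (by field_simp; ring)
  have hUd : HasDerivAt (calU ν h) (I * (-(ν ^ 2 - 1) / (4 * x ^ 2) * h x
      + (ν ^ 2 - 1) / (4 * x) * deriv h x
      - (deriv (deriv h) x + x * deriv (deriv (deriv h)) x))) x :=
    (((hq.mul (hh.hasDerivAt_deriv hU hx)).sub
      ((hid x).mul (hh''.hasDerivAt_deriv hU hx))).const_mul I).congr_deriv (by ring)
  have hXd : deriv (calX h) =ᶠ[𝓝 x] fun y => -2 * deriv h y - 2 * y * deriv (deriv h) y :=
    Filter.eventually_of_mem (hU.mem_nhds hx) fun y hy => HasDerivAt.deriv <|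
      (((hid y).const_mul (-2)).mul (hh'.hasDerivAt_deriv hU hy)).congr_deriv (by ring)
  have hXdd : deriv (deriv (calX h)) x =
      -4 * deriv (deriv h) x - 2 * x * deriv (deriv (deriv h)) x := by
    rw [hXd.deriv_eq]
    exact HasDerivAt.deriv <| (((hh'.hasDerivAt_deriv hU hx).const_mul (-2)).sub
      (((hid x).const_mul 2).mul (hh''.hasDerivAt_deriv hU hx))).congr_deriv (by ring)
  rw [calX, hUd.deriv, calU, hXdd]
  simp only [calU, calX]
  field_simp
  ring

lemma calX_iterate_calU_eqOn (hh : ContDiffOn ℝ ∞ h U) (hU : IsOpen U) (h0 : (0 : ℝ) ∉ U)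
    (j : ℕ) : Set.EqOn (calX ((calU ν)^[j] h))
      ((calU ν)^[j] (calX h) + (2 * j : ℂ) • (calU ν)^[j] h) U := by
  induction j with
  | zero => intro x _; simp
  | succ j ih =>
    intro x hx
    have hj := contDiffOn_iterate_calU hh hU h0 j (ν := ν)
    rw [Function.iterate_succ_apply', calX_calU_apply hj hU hx (ne_of_mem_of_not_mem hx h0),
      calU_congr (ih.eventuallyEq_of_mem (hU.mem_nhds hx)),
      calU_add_apply (contDiffOn_iterate_calU (contDiffOn_calX hh hU) hU h0 j)
        (G := (2 * j : ℂ) • (calU ν)^[j] h) (hj.const_smul (2 * j : ℂ)) hU hx,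
      calU_smul]
    simp only [Function.iterate_succ_apply', Pi.add_apply, Pi.smul_apply, smul_eq_mul]
    push_cast
    ring

end Commutator

lemma isOpen_compl_zero_one : IsOpen ({0, 1}ᶜ : Set ℝ) :=
  (Set.toFinite _).isClosed.isOpen_compl

noncomputable def mixedIter (ν : ℂ) (g : ℝ → ℂ) (p : ℕ × ℕ) : ℝ → ℂ :=
  (calU ν)^[p.1] (calX^[p.2] g)

section MixedIter

variable {ν : ℂ} {g : ℝ → ℂ} {x : ℝ}

lemma contDiffOn_mixedIter (hg : ContDiffOn ℝ ∞ g {0}ᶜ) (p : ℕ × ℕ) :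
    ContDiffOn ℝ ∞ (mixedIter ν g p) {0}ᶜ :=
  contDiffOn_iterate_calU (contDiffOn_iterate_calX hg isOpen_compl_singleton p.2)
    isOpen_compl_singleton (by simp) p.1

lemma aestronglyMeasurable_mixedIter (hg : ContDiffOn ℝ ∞ g {0}ᶜ) (p : ℕ × ℕ) :
    AEStronglyMeasurable (mixedIter ν g p) volume := by
  simpa using (contDiffOn_mixedIter hg p).continuousOn.aestronglyMeasurable
    (μ := volume) (measurableSet_singleton 0).compl

lemma calU_mixedIter (j k : ℕ) : calU ν (mixedIter ν g (j, k)) = mixedIter ν g (j + 1, k) :=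
  (Function.iterate_succ_apply' _ _ _).symm

lemma calX_mixedIter_apply (hg : ContDiffOn ℝ ∞ g {0}ᶜ) (hx : x ≠ 0) (j k : ℕ) :
    calX (mixedIter ν g (j, k)) x =
      mixedIter ν g (j, k + 1) x + 2 * j * mixedIter ν g (j, k) x := by
  rw [mixedIter, calX_iterate_calU_eqOn (contDiffOn_iterate_calX hg isOpen_compl_singleton k)
    isOpen_compl_singleton (by simp) j hx]
  simp [mixedIter, Function.iterate_succ_apply']

end MixedIter

noncomputable def expand (ν : ℂ) (g : ℝ → ℂ) : (ℕ × ℕ →₀ (ℝ → ℂ)) →+ (ℝ → ℂ) :=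
  Finsupp.liftAddHom fun p => AddMonoidHom.mulRight (mixedIter ν g p)

def triangle (β N : ℕ) : Finset (ℕ × ℕ) :=
  {p ∈ range (β + 1) ×ˢ range (N + 1) | p.1 + p.2 ≤ N}

noncomputable def expansions (β N : ℕ) : Submodule ℂ (ℕ × ℕ →₀ (ℝ → ℂ)) :=
  Finsupp.supported (ℝ → ℂ) ℂ ↑(triangle β N) ⊓ ⨅ p, polyInvSubOne.comap (Finsupp.lapply p)

def Expands (c : ℕ × ℕ →₀ (ℝ → ℂ)) (F : ℂ → (ℝ → ℂ) → ℝ → ℂ) : Prop :=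
  ∀ ν g, ContDiffOn ℝ ∞ g {0}ᶜ → Set.EqOn (F ν g) (expand ν g c) {0, 1}ᶜ

section Expansions

variable {ν : ℂ} {g b : ℝ → ℂ} {c : ℕ × ℕ →₀ (ℝ → ℂ)} {p : ℕ × ℕ} {β N : ℕ}

lemma mem_triangle : p ∈ triangle β N ↔ p.1 ≤ β ∧ p.1 + p.2 ≤ N := by
  simp only [triangle, mem_filter, mem_product, mem_range]
  omega

lemma sum_triangle {M : Type*} [AddCommMonoid M] (hβN : β ≤ N) (f : ℕ → ℕ → M) :
    ∑ p ∈ triangle β N, f p.1 p.2 = ∑ j ∈ range (β + 1), ∑ k ∈ range (N - j + 1), f j k :=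
  sum_finset_product' _ _ _ fun p => by simp only [mem_triangle, mem_range]; omega

lemma expand_apply : expand ν g c = ∑ p ∈ c.support, c p * mixedIter ν g p :=
  Finsupp.liftAddHom_apply _ _

lemma expand_single : expand ν g (Finsupp.single p b) = b * mixedIter ν g p :=
  Finsupp.liftAddHom_apply_single _ _ _

lemma mem_expansions :
    c ∈ expansions β N ↔ (∀ p ∈ c.support, p ∈ triangle β N) ∧ ∀ p, c p ∈ polyInvSubOne := by
  simp [expansions, Finsupp.mem_supported, Set.subset_def]

lemma single_mem_expansions (hb : b ∈ polyInvSubOne) (hp : p ∈ triangle β N) :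
    Finsupp.single p b ∈ expansions β N := by
  refine mem_expansions.2 ⟨fun q hq => ?_, fun q => ?_⟩
  · rwa [Finset.mem_singleton.1 (Finsupp.support_single_subset hq)]
  · rcases eq_or_ne p q with rfl | hpq
    · simpa using hb
    · simp [hpq]

lemma contDiffOn_mul_mixedIter (hb : b ∈ polyInvSubOne) (hg : ContDiffOn ℝ ∞ g {0}ᶜ)
    (p : ℕ × ℕ) : ContDiffOn ℝ ∞ (b * mixedIter ν g p) {0, 1}ᶜ :=
  ((polyInvSubOne.contDiffOn hb).mono (by intro; simp_all)).mul
    ((contDiffOn_mixedIter hg p).mono (by intro; simp_all))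

end Expansions

section ExpansionSteps

variable {c : ℕ × ℕ →₀ (ℝ → ℂ)} {β N : ℕ}

lemma exists_expands_of_single {L : ℂ → (ℝ → ℂ) → ℝ → ℂ} {β' N' : ℕ}
    (hL : ∀ ν (s : Finset (ℕ × ℕ)) (F : ℕ × ℕ → ℝ → ℂ),
      (∀ p ∈ s, ContDiffOn ℝ ∞ (F p) {0, 1}ᶜ) →
        Set.EqOn (L ν (∑ p ∈ s, F p)) (∑ p ∈ s, L ν (F p)) {0, 1}ᶜ)
    (hsingle : ∀ b ∈ polyInvSubOne, ∀ p ∈ triangle β N, ∃ c' ∈ expansions β' N',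
      Expands c' fun ν g => L ν (b * mixedIter ν g p))
    (hc : c ∈ expansions β N) :
    ∃ c' ∈ expansions β' N', Expands c' fun ν g => L ν (expand ν g c) := by
  obtain ⟨hsupp, hcoeff⟩ := mem_expansions.1 hc
  choose! e he_mem he using hsingle
  refine ⟨∑ p ∈ c.support, e (c p) p,
    sum_mem fun p hp => he_mem _ (hcoeff p) _ (hsupp p hp), fun ν g hg x hx => ?_⟩
  show L ν (expand ν g c) x = _
  rw [expand_apply (c := c), hL ν _ _ (fun p _ => contDiffOn_mul_mixedIter (hcoeff p) hg p) hx,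
    map_sum, Finset.sum_apply, Finset.sum_apply]
  exact sum_congr rfl fun p hp => he _ (hcoeff p) _ (hsupp p hp) ν g hg hx

lemma exists_expands_calX_expand (hc : c ∈ expansions β N) :
    ∃ c' ∈ expansions β (N + 1), Expands c' fun ν g => calX (expand ν g c) := by
  refine exists_expands_of_single (L := fun _ => calX) (fun ν s F hF x hx => ?_) ?_ hc
  · simpa using calX_sum_apply fun p hp =>
      ((hF p hp).hasDerivAt_deriv isOpen_compl_zero_one hx).differentiableAt
  rintro b hb ⟨j, k⟩ hjk
  rw [mem_triangle] at hjk
  refine ⟨Finsupp.single (j, k) (calX b + (2 * j : ℂ) • b) + Finsupp.single (j, k + 1) b,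
    add_mem (single_mem_expansions (add_mem (polyInvSubOne.calX_mem hb)
        (Submodule.smul_mem _ _ hb)) (mem_triangle.2 (by omega)))
      (single_mem_expansions hb (mem_triangle.2 (by simp only; omega))), ?_⟩
  intro ν g hg x hx
  have hx0 : x ≠ 0 := fun h => hx (by simp [h])
  have hx1 : x ≠ 1 := fun h => hx (by simp [h])
  have hbd := (polyInvSubOne.hasDerivAt_deriv hb hx1).differentiableAt
  have hTd := ((contDiffOn_mixedIter (ν := ν) hg (j, k)).hasDerivAt_deriv
    isOpen_compl_singleton hx0).differentiableAt
  show calX (b * mixedIter ν g (j, k)) x = _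
  rw [calX_mul_apply hbd hTd, calX_mixedIter_apply hg hx0, map_add, expand_single, expand_single]
  simp only [Pi.add_apply, Pi.mul_apply, Pi.smul_apply, smul_eq_mul]
  ring

lemma exists_expands_calU_expand (hc : c ∈ expansions β N) :
    ∃ c' ∈ expansions (β + 1) (N + 1), Expands c' fun ν g => calU ν (expand ν g c) := by
  refine exists_expands_of_single (L := calU) (fun ν s F hF x hx => ?_) ?_ hc
  · simpa using calU_sum_apply hF isOpen_compl_zero_one hx
  rintro b hb ⟨j, k⟩ hjk
  rw [mem_triangle] at hjk
  have hb' := polyInvSubOne.deriv_mem hb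
  refine ⟨Finsupp.single (j + 1, k) b + Finsupp.single (j, k + 1) (I • deriv b)
      + Finsupp.single (j, k) ((2 * j * I : ℂ) • deriv b
        - I • fun x : ℝ => (x : ℂ) * deriv (deriv b) x),
    add_mem (add_mem (single_mem_expansions hb (mem_triangle.2 (by simp only; omega)))
        (single_mem_expansions (Submodule.smul_mem _ _ hb')
          (mem_triangle.2 (by simp only; omega))))
      (single_mem_expansions (sub_mem (Submodule.smul_mem _ _ hb')
          (Submodule.smul_mem _ _ (polyInvSubOne.ofReal_mul_deriv_mem hb')))
        (mem_triangle.2 (by omega))), ?_⟩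
  intro ν g hg x hx
  have hx0 : x ≠ 0 := fun h => hx (by simp [h])
  show calU ν (b * mixedIter ν g (j, k)) x = _
  rw [calU_mul_apply ((polyInvSubOne.contDiffOn hb).mono (by intro; simp_all))
      ((contDiffOn_mixedIter hg (j, k)).mono (by intro; simp_all)) isOpen_compl_zero_one hx,
    calU_mixedIter, calX_mixedIter_apply hg hx0, map_add, map_add, expand_single, expand_single,
    expand_single]
  simp only [Pi.add_apply, Pi.sub_apply, Pi.mul_apply, Pi.smul_apply, smul_eq_mul]
  ring

lemma Expands.calX {F : ℂ → (ℝ → ℂ) → ℝ → ℂ} (hF : Expands c F) (hc : c ∈ expansions β N) :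
    ∃ c' ∈ expansions β (N + 1), Expands c' fun ν g => calX (F ν g) := by
  obtain ⟨c', hc', hexp⟩ := exists_expands_calX_expand hc
  exact ⟨c', hc', fun ν g hg =>
    ((hF ν g hg).calX isOpen_compl_zero_one).trans (hexp ν g hg)⟩

lemma Expands.calU {F : ℂ → (ℝ → ℂ) → ℝ → ℂ} (hF : Expands c F) (hc : c ∈ expansions β N) :
    ∃ c' ∈ expansions (β + 1) (N + 1), Expands c' fun ν g => calU ν (F ν g) := by
  obtain ⟨c', hc', hexp⟩ := exists_expands_calU_expand hc
  exact ⟨c', hc', fun ν g hg =>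
    (((hF ν g hg).iterate_calU isOpen_compl_zero_one 1).trans (hexp ν g hg))⟩

end ExpansionSteps

lemma exists_expands_iterate (α β : ℕ) :
    ∃ c ∈ expansions β (α + β), Expands c fun ν g =>
      (calU ν)^[β] (calX^[α] ((fun ξ : ℝ => ((ξ : ℂ) - 1)⁻¹) * g)) := by
  induction β with
  | zero =>
    induction α with
    | zero =>
      refine ⟨Finsupp.single (0, 0) fun ξ : ℝ => ((ξ : ℂ) - 1)⁻¹,
        single_mem_expansions ⟨X, by simp⟩ (by simp [mem_triangle]), fun ν g _ => ?_⟩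
      simp [expand_single, mixedIter, Set.EqOn]
    | succ α ih =>
      obtain ⟨c, hc, hexp⟩ := ih
      obtain ⟨c', hc', hexp'⟩ := hexp.calX hc
      exact ⟨c', hc', by
        simpa only [Function.iterate_zero_apply, Function.iterate_succ_apply'] using hexp'⟩
  | succ β ih =>
    obtain ⟨c, hc, hexp⟩ := ih
    obtain ⟨c', hc', hexp'⟩ := hexp.calU hc
    exact ⟨c', hc', by simpa only [Function.iterate_succ_apply'] using hexp'⟩

lemma exists_norm_expand_le {c : ℕ × ℕ →₀ (ℝ → ℂ)} {β N : ℕ} (hc : c ∈ expansions β N) :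
    ∃ C > 0, ∀ ν g, ∀ x ∉ Set.Icc (1 / 2 : ℝ) (3 / 2),
      ‖expand ν g c x‖ ≤ C * ∑ p ∈ triangle β N, ‖mixedIter ν g p x‖ := by
  obtain ⟨hsupp, hcoeff⟩ := mem_expansions.1 hc
  choose B hB0 hB using fun p => polyInvSubOne.exists_bound (hcoeff p)
  refine ⟨∑ p ∈ c.support, B p + 1, add_pos_of_nonneg_of_pos (sum_nonneg fun p _ => hB0 p) one_pos,
    fun ν g x hx => ?_⟩
  have hterm : ∀ p ∈ c.support, ‖mixedIter ν g p x‖ ≤ ∑ q ∈ triangle β N, ‖mixedIter ν g q x‖ :=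
    fun p hp => single_le_sum (fun q _ => norm_nonneg (mixedIter ν g q x)) (hsupp p hp)
  calc ‖expand ν g c x‖ ≤ ∑ p ∈ c.support, B p * ‖mixedIter ν g p x‖ := by
        rw [expand_apply, Finset.sum_apply]
        refine (norm_sum_le _ _).trans (sum_le_sum fun p _ => ?_)
        rw [Pi.mul_apply, norm_mul]
        exact mul_le_mul_of_nonneg_right (hB p x hx) (norm_nonneg _)
    _ ≤ ∑ p ∈ c.support, B p * ∑ q ∈ triangle β N, ‖mixedIter ν g q x‖ :=
        sum_le_sum fun p hp => mul_le_mul_of_nonneg_left (hterm p hp) (hB0 p)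
    _ ≤ (∑ p ∈ c.support, B p + 1) * ∑ q ∈ triangle β N, ‖mixedIter ν g q x‖ := by
        rw [← sum_mul]
        exact mul_le_mul_of_nonneg_right (by linarith) (sum_nonneg fun _ _ => norm_nonneg _)

section WeightedL2

variable {h : ℝ → ℂ} {J : Set ℝ}

lemma L2w_eq_eLpNorm (h : ℝ → ℂ) (J : Set ℝ) :
    L2w h J = eLpNorm h 2 ((volume.restrict J).withDensity fun ξ => (ENNReal.ofReal |ξ|)⁻¹) := by
  rw [L2w, eLpNorm_eq_lintegral_rpow_enorm_toReal two_ne_zero ENNReal.ofNat_ne_top,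
    lintegral_withDensity_eq_lintegral_mul_non_measurable _
      (f := fun ξ => (ENNReal.ofReal |ξ|)⁻¹) (by fun_prop)
      (ae_restrict_of_ae ((Measure.ae_ne volume 0).mono fun ξ hξ => by simpa using hξ))]
  congr 2
  ext ξ
  rw [Pi.mul_apply, ENNReal.toReal_ofNat, ENNReal.rpow_two, div_eq_mul_inv, mul_comm,
    ← ofReal_norm, ENNReal.ofReal_pow (norm_nonneg _)]

lemma L2w_smul (c : ℂ) (h : ℝ → ℂ) (J : Set ℝ) : L2w (c • h) J = ‖c‖ₑ * L2w h J := by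
  simp only [L2w_eq_eLpNorm, eLpNorm_const_smul]

lemma L2w_congr_ae {G : ℝ → ℂ} (hhG : h =ᵐ[volume.restrict J] G) : L2w h J = L2w G J := by
  rw [L2w, L2w]
  congr 1
  exact lintegral_congr_ae (hhG.mono fun ξ hξ => by simp only [hξ])

lemma L2w_mono_set {J' : Set ℝ} (hJ : J ⊆ J') : L2w h J ≤ L2w h J' :=
  ENNReal.rpow_le_rpow (lintegral_mono_set hJ) (by norm_num)

lemma L2w_le_of_ae_norm_le {ι : Type*} {s : Finset ι} {H : ι → ℝ → ℂ} {C : ℝ} (hC : 0 ≤ C)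
    (hH : ∀ i ∈ s, AEStronglyMeasurable (H i) (volume.restrict J))
    (hbound : ∀ᵐ x ∂volume.restrict J, ‖h x‖ ≤ C * ∑ i ∈ s, ‖H i x‖) :
    L2w h J ≤ ENNReal.ofReal C * ∑ i ∈ s, L2w (H i) J := by
  simp only [L2w_eq_eLpNorm]
  set μ := (volume.restrict J).withDensity fun ξ => (ENNReal.ofReal |ξ|)⁻¹
  have hac : μ ≪ volume.restrict J := withDensity_absolutelyContinuous _ _
  have hfun : (fun x => C * ∑ i ∈ s, ‖H i x‖) = C • ∑ i ∈ s, fun x => ‖H i x‖ := by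
    ext x; simp [Finset.sum_apply]
  calc eLpNorm h 2 μ ≤ eLpNorm (fun x => C * ∑ i ∈ s, ‖H i x‖) 2 μ :=
        eLpNorm_mono_ae_real (hac.ae_le hbound)
    _ ≤ ENNReal.ofReal C * ∑ i ∈ s, eLpNorm (fun x => ‖H i x‖) 2 μ := by
        rw [hfun, eLpNorm_const_smul, Real.enorm_of_nonneg hC]
        gcongr
        exact eLpNorm_sum_le (fun i hi => ((hH i hi).mono_ac hac).norm) one_le_two
    _ = ENNReal.ofReal C * ∑ i ∈ s, eLpNorm (H i) 2 μ := by simp only [eLpNorm_norm]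

end WeightedL2

lemma exists_L2w_expand_le {c : ℕ × ℕ →₀ (ℝ → ℂ)} {β N : ℕ} (hc : c ∈ expansions β N) :
    ∃ C > 0, ∀ ν g, ContDiffOn ℝ ∞ g {0}ᶜ →
      L2w (expand ν g c) (Set.Icc (1 / 2 : ℝ) (3 / 2))ᶜ ≤
        ENNReal.ofReal C * ∑ p ∈ triangle β N, L2w (mixedIter ν g p) Set.univ := by
  obtain ⟨C, hC, hbound⟩ := exists_norm_expand_le hc
  refine ⟨C, hC, fun ν g hg => ?_⟩
  calc L2w (expand ν g c) (Set.Icc (1 / 2 : ℝ) (3 / 2))ᶜ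
      ≤ ENNReal.ofReal C * ∑ p ∈ triangle β N,
          L2w (mixedIter ν g p) (Set.Icc (1 / 2 : ℝ) (3 / 2))ᶜ :=
        L2w_le_of_ae_norm_le hC.le (fun p _ => (aestronglyMeasurable_mixedIter hg p).restrict)
          ((ae_restrict_mem measurableSet_Icc.compl).mono fun x hx => hbound ν g x hx)
    _ ≤ ENNReal.ofReal C * ∑ p ∈ triangle β N, L2w (mixedIter ν g p) Set.univ := by
        gcongr
        exact L2w_mono_set (Set.subset_univ _)

/-- Estimate away from the singular interval `I = [1/2, 3/2]` for the solution
`f(ξ) = (i/λ)·g(ξ)/(ξ−1)` of the (rescaled) twisted equation: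
`‖𝒰^β 𝒳^α f‖_{𝕃²(ℝ∖I)} ≤ (C/|λ|) Σ_{j+k≤α+β, j≤β} ‖𝒰^j 𝒳^k g‖_{𝕃²(ℝ)}`. -/
theorem twisted_solution_estimate_off_I (α β : ℕ) :
    ∃ C > 0, ∀ (ν : ℂ) (lam : ℝ), lam ≠ 0 →
      ∀ g : ℝ → ℂ, ContDiffOn ℝ (⊤ : ℕ∞) g {(0 : ℝ)}ᶜ →
        L2w ((calU ν)^[β] (calX^[α]
            (fun ξ : ℝ => Complex.I / (lam : ℂ) * g ξ / ((ξ : ℂ) - 1))))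
          (Set.Icc (1 / 2 : ℝ) (3 / 2))ᶜ ≤
        ENNReal.ofReal (C / |lam|) *
          ∑ j ∈ range (β + 1), ∑ k ∈ range (α + β - j + 1),
            L2w ((calU ν)^[j] (calX^[k] g)) Set.univ := by
  obtain ⟨c, hc, hexp⟩ := exists_expands_iterate α β
  obtain ⟨C, hC, hL2⟩ := exists_L2w_expand_le hc
  refine ⟨C, hC, fun ν lam _ g hg => ?_⟩
  have hf : (fun ξ : ℝ => I / (lam : ℂ) * g ξ / ((ξ : ℂ) - 1))
      = (I / lam) • ((fun ξ : ℝ => ((ξ : ℂ) - 1)⁻¹) * g) := by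
    ext ξ
    simp only [Pi.smul_apply, Pi.mul_apply, smul_eq_mul]
    ring
  have hae := ae_restrict_of_ae (μ := volume) (s := (Set.Icc (1 / 2 : ℝ) (3 / 2))ᶜ)
    (((Set.toFinite {0, 1}).countable.ae_notMem volume).mono fun x hx => hexp ν g hg hx)
  rw [hf, iterate_calU_iterate_calX_smul, L2w_smul, L2w_congr_ae hae,
    ← sum_triangle (Nat.le_add_left β α) fun j k => L2w ((calU ν)^[j] (calX^[k] g)) Set.univ]
  calc ‖I / (lam : ℂ)‖ₑ * L2w (expand ν g c) (Set.Icc (1 / 2 : ℝ) (3 / 2))ᶜ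
      ≤ ‖I / (lam : ℂ)‖ₑ * (ENNReal.ofReal C *
          ∑ p ∈ triangle β (α + β), L2w (mixedIter ν g p) Set.univ) := by
        gcongr
        exact hL2 ν g hg
    _ = _ := by
        rw [← mul_assoc, ← ofReal_norm, ← ENNReal.ofReal_mul (norm_nonneg _)]
        simp [mixedIter, div_eq_inv_mul]
end

section
/- Let λ be a nonzero real number and let g : (0,∞) → ℂ be smooth with g(1) = 0. Define f on (0,∞) by f(ξ) = (i/λ)·g(ξ)/(ξ − 1) for ξ ≠ 1 and f(1) = (i/λ)·g′(1), so that f is smooth and f(ξ) = (i/λ)·∫₀¹ g′(1 + t(ξ−1)) dt. Then for every α ∈ ℕ and every ξ > 0, 𝒳^α f(ξ) = (i/λ)·∫₀¹ [ ((1 − (1−t)/η)·𝒳)^α g′ ](1 + t(ξ−1)) dt, where for each fixed t the expression ((1 − (1−t)/η)·𝒳)^α denotes the α-fold iterate of the operator sending h to the function η ↦ (1 − (1−t)/η)·(𝒳h)(η), applied to g′ and then evaluated at the point 1 + t(ξ−1). -/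
open Complex intervalIntegral

/-!
Since `g 1 = 0`, `f ξ = (i/λ) ∫₀¹ g′(1 + t(ξ - 1)) dt` for every `ξ > 0`, with an integrand smooth in
`(t, ξ)`, so `𝒳` can be taken under the integral any number of times. For fixed `t`, the substitution
`η = 1 + t(y - 1)` gives `y = (η - (1 - t)) / t`, hence `-2y ∂_y = -2(η - (1 - t)) ∂_η`, which is the
operator `(1 - (1 - t)/η)·𝒳` in the variable `η`.
-/

open Set Metric Filter Topology
open scoped ContDiff

section

variable {E : Type*} [NormedAddCommGroup E] [NormedSpace ℝ E]

theorem DifferentiableAt.hasDerivAt_slice_snd {F : ℝ × ℝ → E} {p : ℝ × ℝ}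
    (hF : DifferentiableAt ℝ F p) :
    HasDerivAt (fun x => F (p.1, x)) (fderiv ℝ F p (0, 1)) p.2 :=
  hF.hasFDerivAt.comp_hasDerivAt p.2 ((hasDerivAt_const _ _).prodMk (hasDerivAt_id _))

theorem ContDiffOn.deriv_slice_snd {F : ℝ × ℝ → E} {U : Set (ℝ × ℝ)} {m n : WithTop ℕ∞}
    (hF : ContDiffOn ℝ n F U) (hU : IsOpen U) (hmn : m + 1 ≤ n) :
    ContDiffOn ℝ m (fun p : ℝ × ℝ => deriv (fun x => F (p.1, x)) p.2) U :=
  ((hF.fderiv_of_isOpen hU hmn).clm_apply contDiffOn_const).congr fun p hp =>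
    (((hF.of_le (le_add_self.trans hmn)).differentiableOn one_ne_zero p hp).differentiableAt
      (hU.mem_nhds hp)).hasDerivAt_slice_snd.deriv

theorem hasDerivAt_intervalIntegral_slice [CompleteSpace E] {F : ℝ × ℝ → E}
    {U : Set (ℝ × ℝ)} (hU : IsOpen U) (hF : ContDiffOn ℝ 1 F U) {a b x₀ : ℝ}
    (hK : uIcc a b ×ˢ {x₀} ⊆ U) :
    HasDerivAt (fun x => ∫ t in a..b, F (t, x))
      (∫ t in a..b, deriv (fun x => F (t, x)) x₀) x₀ := by
  obtain ⟨δ, hδ, hδU⟩ :=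
    (isCompact_uIcc.prod isCompact_singleton).exists_cthickening_subset_open hU hK
  have hmem : ∀ t ∈ uIcc a b, ∀ x ∈ closedBall x₀ δ, (t, x) ∈ U := fun t ht x hx =>
    hδU <| mem_cthickening_of_dist_le (t, x) (t, x₀) δ _ ⟨ht, rfl⟩ <| by
      simpa [Prod.dist_eq] using hx
  have hslice : ∀ t ∈ uIcc a b, ∀ x ∈ closedBall x₀ δ,
      HasDerivAt (fun y => F (t, y)) (fderiv ℝ F (t, x) (0, 1)) x := fun t ht x hx =>
    ((hF.differentiableOn one_ne_zero _ (hmem t ht x hx)).differentiableAt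
      (hU.mem_nhds (hmem t ht x hx))).hasDerivAt_slice_snd
  have hcont : ∀ G : ℝ × ℝ → E, ContinuousOn G U → ∀ x ∈ closedBall x₀ δ,
      ContinuousOn (fun t => G (t, x)) (uIcc a b) := fun G hG x hx =>
    hG.comp (by fun_prop) fun t ht => hmem t ht x hx
  have hF' : ContinuousOn (fun p => fderiv ℝ F p (0, 1)) U :=
    (hF.continuousOn_fderiv_of_isOpen hU le_rfl).clm_apply continuousOn_const
  obtain ⟨C, hC⟩ := (isCompact_uIcc.prod (isCompact_closedBall x₀ δ)).exists_bound_of_continuousOn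
    (hF'.mono fun p hp => hmem p.1 hp.1 p.2 hp.2)
  have hx₀ : x₀ ∈ closedBall x₀ δ := mem_closedBall_self hδ.le
  rw [integral_congr fun t ht => (hslice t ht x₀ hx₀).deriv]
  refine (hasDerivAt_integral_of_dominated_loc_of_deriv_le (μ := MeasureTheory.volume)
    (F := fun x t => F (t, x)) (F' := fun x t => fderiv ℝ F (t, x) (0, 1))
    (bound := fun _ => C) (ball_mem_nhds x₀ hδ) ?_ ?_ ?_ ?_ intervalIntegrable_const ?_).2
  · filter_upwards [ball_mem_nhds x₀ hδ] with x hx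
    exact (hcont F hF.continuousOn x (ball_subset_closedBall hx)).mono uIoc_subset_uIcc
      |>.aestronglyMeasurable measurableSet_uIoc
  · exact (hcont F hF.continuousOn x₀ hx₀).intervalIntegrable
  · exact (hcont _ hF' x₀ hx₀).mono uIoc_subset_uIcc |>.aestronglyMeasurable measurableSet_uIoc
  · exact .of_forall fun t ht x hx =>
      hC (t, x) ⟨uIoc_subset_uIcc ht, ball_subset_closedBall hx⟩
  · exact .of_forall fun t ht x hx =>
      hslice t (uIoc_subset_uIcc ht) x (ball_subset_closedBall hx)

theorem smul_integral_deriv_comp_segment [CompleteSpace E] {g : ℝ → E} {a b : ℝ}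
    (hg : ∀ x ∈ uIcc a b, DifferentiableAt ℝ g x) (hg' : ContinuousOn (deriv g) (uIcc a b)) :
    (b - a) • ∫ t in (0 : ℝ)..1, deriv g (a + t * (b - a)) = g b - g a := by
  have hsegment : (fun t => deriv g (a + t * (b - a))) = fun t => deriv g ((b - a) * t + a) := by
    funext t; ring_nf
  rw [hsegment, smul_integral_comp_mul_add]
  simpa using integral_deriv_eq_sub hg hg'.intervalIntegrable

end

theorem calX_eq_of_eventuallyEq {F G : ℝ → ℂ} {x : ℝ} (h : F =ᶠ[𝓝 x] G) :
    calX F x = calX G x := by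
  rw [calX, calX, h.deriv_eq]

theorem ContDiffOn.calX_iterate {F : ℝ → ℝ → ℂ} {U : Set (ℝ × ℝ)} (hU : IsOpen U)
    (hF : ContDiffOn ℝ ∞ (fun p : ℝ × ℝ => F p.1 p.2) U) (α : ℕ) :
    ContDiffOn ℝ ∞ (fun p : ℝ × ℝ => calX^[α] (F p.1) p.2) U := by
  induction α with
  | zero => exact hF
  | succ n ih =>
    simp only [Function.iterate_succ_apply']
    exact (contDiffOn_const.mul (ofRealCLM.contDiff.comp contDiff_snd).contDiffOn).mul
      (ih.deriv_slice_snd hU le_rfl)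

theorem calX_iterate_eq_const_mul_integral {F : ℝ → ℝ → ℂ} {U : Set (ℝ × ℝ)} {V : Set ℝ}
    {a b : ℝ} (hU : IsOpen U) (hV : IsOpen V) (hVU : uIcc a b ×ˢ V ⊆ U)
    (hF : ContDiffOn ℝ ∞ (fun p : ℝ × ℝ => F p.1 p.2) U) {f : ℝ → ℂ} (c : ℂ)
    (hf : ∀ x ∈ V, f x = c * ∫ t in a..b, F t x) (α : ℕ) :
    ∀ x ∈ V, calX^[α] f x = c * ∫ t in a..b, calX^[α] (F t) x := by
  induction α with
  | zero => exact hf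
  | succ n ih =>
    intro x hx
    have hloc : calX^[n] f =ᶠ[𝓝 x] fun y => c * ∫ t in a..b, calX^[n] (F t) y :=
      eventually_of_mem (hV.mem_nhds hx) ih
    have hderiv := (hasDerivAt_intervalIntegral_slice hU ((hF.calX_iterate hU n).of_le (by simp))
      fun p ⟨ht, hp⟩ => hVU ⟨ht, (mem_singleton_iff.1 hp) ▸ hx⟩).const_mul c
    simp only [Function.iterate_succ_apply', calX_eq_of_eventuallyEq hloc]
    rw [calX, hderiv.deriv]
    simp only [calX, ← integral_const_mul]
    congr 1; funext t; ring

noncomputable def weightedCalX (t : ℝ) (h : ℝ → ℂ) : ℝ → ℂ :=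
  fun η => (1 - (1 - (t : ℂ)) / (η : ℂ)) * calX h η

theorem deriv_comp_segment (h : ℝ → ℂ) (t x : ℝ) :
    deriv (fun y => h (1 + t * (y - 1))) x = t * deriv h (1 + t * (x - 1)) := by
  have hsegment : (fun y => h (1 + t * (y - 1))) = fun y => h ((1 - t) + t * y) := by
    funext y; ring_nf
  rw [hsegment, deriv_comp_mul_left t (fun z => h ((1 - t) + z)), deriv_comp_const_add,
    real_smul]
  ring_nf

theorem calX_comp_segment (h : ℝ → ℂ) {t x : ℝ} (hx : 1 + t * (x - 1) ≠ 0) :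
    calX (fun y => h (1 + t * (y - 1))) x = weightedCalX t h (1 + t * (x - 1)) := by
  have hx' : (1 + t * (x - 1) : ℂ) ≠ 0 := by exact_mod_cast hx
  -- both sides are `-2 t x h′(1 + t(x - 1))`
  simp only [calX, weightedCalX, deriv_comp_segment]
  push_cast
  field_simp
  ring

theorem calX_iterate_comp_segment (h : ℝ → ℂ) (t : ℝ) (α : ℕ) {x : ℝ}
    (hx : 1 + t * (x - 1) ≠ 0) :
    calX^[α] (fun y => h (1 + t * (y - 1))) x = (weightedCalX t)^[α] h (1 + t * (x - 1)) := by
  induction α generalizing x with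
  | zero => rfl
  | succ n ih =>
    have hopen : IsOpen {y : ℝ | 1 + t * (y - 1) ≠ 0} := isOpen_ne_fun (by fun_prop) (by fun_prop)
    have hloc : calX^[n] (fun y => h (1 + t * (y - 1))) =ᶠ[𝓝 x]
        fun y => (weightedCalX t)^[n] h (1 + t * (y - 1)) :=
      eventually_of_mem (hopen.mem_nhds hx) fun y hy => ih hy
    rw [Function.iterate_succ_apply', Function.iterate_succ_apply',
      calX_eq_of_eventuallyEq hloc, calX_comp_segment _ hx]

theorem eq_const_mul_integral_deriv_comp_segment {lam : ℝ} {g f : ℝ → ℂ}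
    (hg : ContDiffOn ℝ ∞ g (Ioi 0)) (hg1 : g 1 = 0)
    (hf : ∀ ξ : ℝ, ξ ≠ 1 → f ξ = I / (lam : ℂ) * g ξ / ((ξ : ℂ) - 1))
    (hf1 : f 1 = I / (lam : ℂ) * deriv g 1) {ξ : ℝ} (hξ : 0 < ξ) :
    f ξ = I / lam * ∫ t in (0 : ℝ)..1, deriv g (1 + t * (ξ - 1)) := by
  rcases eq_or_ne ξ 1 with rfl | hξ1
  · simp [hf1]
  have hsub : uIcc 1 ξ ⊆ Ioi 0 := fun x hx => (lt_min one_pos hξ).trans_le hx.1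
  have hftc := smul_integral_deriv_comp_segment
    (fun x hx => (hg.contDiffAt (isOpen_Ioi.mem_nhds (hsub hx))).differentiableAt (by simp))
    ((hg.continuousOn_deriv_of_isOpen isOpen_Ioi (by simp)).mono hsub)
  have hξ1' : (ξ : ℂ) - 1 ≠ 0 := sub_ne_zero.2 (by exact_mod_cast hξ1)
  rw [hf ξ hξ1, ← sub_zero (g ξ), ← hg1, ← hftc, real_smul]
  push_cast
  rw [mul_div_assoc, mul_div_cancel_left₀ _ hξ1']

theorem calX_iterate_integral_formula_general (lam : ℝ)
    (g : ℝ → ℂ) (hg : ContDiffOn ℝ (⊤ : ℕ∞) g (Set.Ioi (0 : ℝ))) (hg1 : g 1 = 0)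
    (f : ℝ → ℂ)
    (hf : ∀ ξ : ℝ, ξ ≠ 1 → f ξ = Complex.I / (lam : ℂ) * g ξ / ((ξ : ℂ) - 1))
    (hf1 : f 1 = Complex.I / (lam : ℂ) * deriv g 1) :
    ∀ (α : ℕ) (ξ : ℝ), 0 < ξ →
      calX^[α] f ξ =
        Complex.I / (lam : ℂ) *
          ∫ t in (0 : ℝ)..1,
            ((fun h : ℝ → ℂ => fun η : ℝ =>
                (1 - (1 - (t : ℂ)) / (η : ℂ)) * calX h η)^[α] (deriv g))
              (1 + t * (ξ - 1)) := by
  intro α ξ hξ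
  set U : Set (ℝ × ℝ) := {p | 0 < 1 + p.1 * (p.2 - 1)}
  have hU : IsOpen U := isOpen_lt continuous_const (by fun_prop)
  have hsegment : ∀ t ∈ uIcc (0 : ℝ) 1, ∀ x : ℝ, 0 < x → 0 < 1 + t * (x - 1) := by
    intro t ht x hx
    obtain ⟨ht0, ht1⟩ : 0 ≤ t ∧ t ≤ 1 := by rwa [uIcc_of_le zero_le_one] at ht
    nlinarith [mul_nonneg ht0 hx.le]
  have hF : ContDiffOn ℝ ∞ (fun p : ℝ × ℝ => deriv g (1 + p.1 * (p.2 - 1))) U :=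
    (hg.deriv_of_isOpen isOpen_Ioi le_rfl).comp (by fun_prop) fun p hp => hp
  rw [calX_iterate_eq_const_mul_integral hU isOpen_Ioi
    (fun p hp => hsegment p.1 hp.1 p.2 hp.2) hF _
    (fun x hx => eq_const_mul_integral_deriv_comp_segment hg hg1 hf hf1 hx) α ξ hξ]
  congr 1
  exact integral_congr fun t ht => calX_iterate_comp_segment _ t α (hsegment t ht ξ hξ).ne'

/-- Integral formula for `𝒳^α f` where `f(ξ) = (i/λ)·g(ξ)/(ξ−1)` (extended at `ξ = 1` by
`f(1) = (i/λ)·g′(1)`), for `g` smooth on `(0,∞)` with `g(1) = 0`: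
`𝒳^α f(ξ) = (i/λ)·∫₀¹ [((1 − (1−t)/η)·𝒳)^α g′](1 + t(ξ−1)) dt`. -/
theorem calX_iterate_integral_formula (lam : ℝ) (hlam : lam ≠ 0)
    (g : ℝ → ℂ) (hg : ContDiffOn ℝ (⊤ : ℕ∞) g (Set.Ioi (0 : ℝ))) (hg1 : g 1 = 0)
    (f : ℝ → ℂ)
    (hf : ∀ ξ : ℝ, ξ ≠ 1 → f ξ = Complex.I / (lam : ℂ) * g ξ / ((ξ : ℂ) - 1))
    (hf1 : f 1 = Complex.I / (lam : ℂ) * deriv g 1) :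
    ∀ (α : ℕ) (ξ : ℝ), 0 < ξ →
      calX^[α] f ξ =
        Complex.I / (lam : ℂ) *
          ∫ t in (0 : ℝ)..1,
            ((fun h : ℝ → ℂ => fun η : ℝ =>
                (1 - (1 - (t : ℂ)) / (η : ℂ)) * calX h η)^[α] (deriv g))
              (1 + t * (ξ - 1)) :=
  calX_iterate_integral_formula_general lam g hg hg1 f hf hf1
end

section
/- For every β ∈ ℕ and every fixed q ∈ C_c^∞(ℝ) with support contained in [3/4, 4/3] and q ≡ 1 on [1, 5/4], there is a constant C > 0 such that for every real a with |a| ≥ 4, setting ν = ia, g(ξ) = q(ξ)·(ξ^{ν+1} − 1) for ξ > 0 (and g = 0 for ξ ≤ 0), and I_ν = [1, 1 + 1/|a|], the following holds for every ξ ∈ I_ν: | ∫₀¹ t^β · Σ_{m+n ≤ β, m ≤ β−1} (t−1)^m · (A_{m,n} g′)(1 + t(ξ−1)) dt | ≤ C·|a|^{2β}. Here, for m, n ∈ ℕ, A_{m,n} denotes the sum, over all sequences (l₁, …, l_{m+n}) ∈ {0,1}^{m+n} containing exactly m zeros and n ones, of the compositions W_{l₁}∘⋯∘W_{l_{m+n}},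 where W₀ is the operator h ↦ h″ and W₁ = Û. -/
open Complex Finset intervalIntegral

/-- The operator `Û f (ξ) = i((ν−1)·f′(ξ) − ξ·f″(ξ))`. -/
noncomputable def hatU (ν : ℂ) (f : ℝ → ℂ) : ℝ → ℂ :=
  fun ξ => Complex.I * ((ν - 1) * deriv f ξ - (ξ : ℂ) * deriv (deriv f) ξ)

/-- `W₀ = d²/dξ²` and `W₁ = Û`. -/
noncomputable def Wop (ν : ℂ) : Fin 2 → (ℝ → ℂ) → (ℝ → ℂ) :=
  fun i => if i = 0 then (fun h => deriv (deriv h)) else hatU ν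

/-- `A_{m,n}` is the sum, over all sequences in `{0,1}^{m+n}` with exactly `m` zeros and
`n` ones, of the corresponding compositions `W_{l₁}∘⋯∘W_{l_{m+n}}`. -/
noncomputable def Aop (ν : ℂ) (m n : ℕ) (h : ℝ → ℂ) : ℝ → ℂ :=
  ∑ s ∈ Finset.univ.filter
      (fun s : Fin (m + n) → Fin 2 => (Finset.univ.filter fun i => s i = 0).card = m),
    ((List.ofFn fun i => Wop ν (s i)).foldr (· ∘ ·) id) h

/-- The function `g(ξ) = q(ξ)·(ξ^{ν+1} − 1)` for `ξ > 0` (and `0` for `ξ ≤ 0`),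
where `ν = ia`. -/
noncomputable def gfun (q : ℝ → ℂ) (a : ℝ) : ℝ → ℂ :=
  fun ξ => if 0 < ξ then q ξ * ((ξ : ℂ) ^ (Complex.I * a + 1) - 1) else 0

/-!
On `(1, 5/4)` we have `q = 1`, so `g′(ξ) = (ν+1) ξ^ν`. On powers, `W₀ (ξ^μ) = μ(μ-1) ξ^(μ-2)` and
`Û (ξ^μ) = iμ(ν-μ) ξ^(μ-1)`. Along a word the exponent is always `ν - k` with `k ≤ 2β`, so a `W₀`
costs `O(|a|²)` but a `Û` only `O(|a|)`, its factor `ν - μ = k` being independent of `a`. With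
`m ≤ β - 1` letters `W₀` and `m + n ≤ β` letters in all, together with the factor `ν + 1` this is
`O(|a|^(1 + 2m + n)) = O(|a|^(2β))`, while `|ξ^(ν-k)| ≤ 1` for `ξ ≥ 1`. The point `ξ = 1`, where
`q` need not be `1` on a neighbourhood, is reached by continuity.
-/

def powerDrop (i : Fin 2) : ℕ := if i = 0 then 2 else 1

def wordPowerDrop (l : List (Fin 2)) : ℕ := (l.map powerDrop).sum

noncomputable def stepCoeff (ν μ : ℂ) (i : Fin 2) : ℂ :=
  if i = 0 then μ * (μ - 1) else I * μ * (ν - μ)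

noncomputable def wordCoeff (ν : ℂ) : List (Fin 2) → ℂ
  | [] => 1
  | i :: l => stepCoeff ν (ν - wordPowerDrop l) i * wordCoeff ν l

noncomputable def wordOp (ν : ℂ) (l : List (Fin 2)) : (ℝ → ℂ) → (ℝ → ℂ) :=
  (l.map (Wop ν)).foldr (· ∘ ·) id

lemma wordPowerDrop_cons (i : Fin 2) (l : List (Fin 2)) :
    wordPowerDrop (i :: l) = powerDrop i + wordPowerDrop l := by
  simp [wordPowerDrop]

lemma wordPowerDrop_ofFn {k : ℕ} (s : Fin k → Fin 2) :
    wordPowerDrop (List.ofFn s) = k + #{i | s i = 0} := by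
  have hsplit : ∀ i, powerDrop (s i) = 1 + if s i = 0 then 1 else 0 := fun i => by
    unfold powerDrop; split_ifs <;> rfl
  simp only [wordPowerDrop, List.map_ofFn, List.sum_ofFn, Function.comp_apply, hsplit,
    sum_add_distrib, card_filter]
  simp

lemma Aop_eq_sum_wordOp (ν : ℂ) (m n : ℕ) (h : ℝ → ℂ) :
    Aop ν m n h = ∑ s : Fin (m + n) → Fin 2 with #{i | s i = 0} = m,
      wordOp ν (List.ofFn s) h := by
  simp only [Aop, wordOp, List.map_ofFn]
  rfl

lemma hasDerivAt_ofReal_cpow (μ : ℂ) {x : ℝ} (hx : 0 < x) :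
    HasDerivAt (fun y : ℝ => (y : ℂ) ^ μ) (μ * (x : ℂ) ^ (μ - 1)) x :=
  (hasStrictDerivAt_cpow_const (ofReal_mem_slitPlane.2 hx)).hasDerivAt.comp_ofReal

lemma contDiffOn_ofReal_cpow (μ : ℂ) :
    ContDiffOn ℝ (⊤ : ℕ∞) (fun x : ℝ => (x : ℂ) ^ μ) (Set.Ioi 0) := by
  intro x hx
  have hanalytic : AnalyticAt ℂ (fun z : ℂ => z ^ μ) (x : ℂ) :=
    analyticAt_id.cpow analyticAt_const (ofReal_mem_slitPlane.2 hx)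
  exact ((hanalytic.contDiffAt.restrict_scalars ℝ).comp x
    ofRealCLM.contDiff.contDiffAt).contDiffWithinAt

section PowerCalculus

variable {s : Set ℝ} {f : ℝ → ℂ} {c μ : ℂ}

lemma eqOn_deriv_const_mul_cpow (hs : IsOpen s) (hs0 : s ⊆ Set.Ioi 0)
    (h : Set.EqOn f (fun x => c * (x : ℂ) ^ μ) s) :
    Set.EqOn (deriv f) (fun x => c * μ * (x : ℂ) ^ (μ - 1)) s := by
  intro x hx
  rw [(Filter.eventuallyEq_of_mem (hs.mem_nhds hx) h).deriv_eq,
    ((hasDerivAt_ofReal_cpow μ (hs0 hx)).const_mul c).deriv]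
  ring

lemma eqOn_Wop_const_mul_cpow (hs : IsOpen s) (hs0 : s ⊆ Set.Ioi 0) (ν : ℂ) (i : Fin 2)
    (h : Set.EqOn f (fun x => c * (x : ℂ) ^ μ) s) :
    Set.EqOn (Wop ν i f) (fun x => c * stepCoeff ν μ i * (x : ℂ) ^ (μ - powerDrop i)) s := by
  have h1 := eqOn_deriv_const_mul_cpow hs hs0 h
  have h2 := eqOn_deriv_const_mul_cpow hs hs0 h1
  intro x hx
  fin_cases i
  · simp only [Fin.zero_eta, Wop, stepCoeff, powerDrop, if_true]
    rw [h2 hx]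
    push_cast
    ring_nf
  · have hx0 : (x : ℂ) ≠ 0 := ofReal_ne_zero.2 (hs0 hx).ne'
    have hpow : (x : ℂ) ^ (μ - 1) = (x : ℂ) ^ (μ - 1 - 1) * x := by
      have := cpow_add (μ - 1 - 1) 1 hx0
      rwa [cpow_one, sub_add_cancel] at this
    simp only [Fin.mk_one, Wop, hatU, stepCoeff, powerDrop, one_ne_zero, if_false]
    rw [h1 hx, h2 hx]
    beta_reduce
    rw [Nat.cast_one, hpow]
    ring

lemma eqOn_wordOp_const_mul_cpow (hs : IsOpen s) (hs0 : s ⊆ Set.Ioi 0) (ν : ℂ)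
    (h : Set.EqOn f (fun x => c * (x : ℂ) ^ ν) s) (l : List (Fin 2)) :
    Set.EqOn (wordOp ν l f) (fun x => c * wordCoeff ν l * (x : ℂ) ^ (ν - wordPowerDrop l)) s := by
  induction l with
  | nil => simpa [wordOp, wordCoeff, wordPowerDrop] using h
  | cons i l ih =>
    intro x hx
    rw [show wordOp ν (i :: l) f = Wop ν i (wordOp ν l f) from rfl,
      eqOn_Wop_const_mul_cpow hs hs0 ν i ih hx, wordCoeff, wordPowerDrop_cons]
    push_cast
    ring_nf

end PowerCalculus

lemma norm_stepCoeff_le {ν : ℂ} (hν : 1 ≤ ‖ν‖) {k J : ℕ} (hk : k ≤ J) (i : Fin 2) :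
    ‖stepCoeff ν (ν - k) i‖ ≤ ((J : ℝ) + 2) ^ 2 * ‖ν‖ ^ powerDrop i := by
  have hkJ : (k : ℝ) ≤ J := by exact_mod_cast hk
  have hμ' : ‖ν - k‖ ≤ ‖ν‖ + k := by simpa using norm_sub_le ν (k : ℂ)
  have hμ : ‖ν - k‖ ≤ ((J : ℝ) + 2) * ‖ν‖ := by nlinarith
  have hμ1 : ‖ν - k - 1‖ ≤ ((J : ℝ) + 2) * ‖ν‖ := by
    have := norm_sub_le (ν - k) 1
    rw [norm_one] at this
    nlinarith
  fin_cases i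
  · simp only [Fin.zero_eta, stepCoeff, powerDrop, if_true, norm_mul]
    calc ‖ν - k‖ * ‖ν - k - 1‖ ≤ (((J : ℝ) + 2) * ‖ν‖) * (((J : ℝ) + 2) * ‖ν‖) :=
          mul_le_mul hμ hμ1 (norm_nonneg _) (by positivity)
      _ = ((J : ℝ) + 2) ^ 2 * ‖ν‖ ^ 2 := by ring
  · simp only [Fin.mk_one, stepCoeff, powerDrop, one_ne_zero, if_false, norm_mul, norm_I,
      sub_sub_cancel, Complex.norm_natCast, one_mul, pow_one]
    calc ‖ν - k‖ * k ≤ (((J : ℝ) + 2) * ‖ν‖) * ((J : ℝ) + 2) :=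
          mul_le_mul hμ (by linarith) (Nat.cast_nonneg _) (by positivity)
      _ = ((J : ℝ) + 2) ^ 2 * ‖ν‖ := by ring

lemma norm_wordCoeff_le {ν : ℂ} (hν : 1 ≤ ‖ν‖) {J : ℕ} :
    ∀ l : List (Fin 2), wordPowerDrop l ≤ J →
      ‖wordCoeff ν l‖ ≤ ((J : ℝ) + 2) ^ (2 * l.length) * ‖ν‖ ^ wordPowerDrop l
  | [], _ => by simp [wordCoeff, wordPowerDrop]
  | i :: l, hl => by
    rw [wordPowerDrop_cons] at hl
    calc ‖wordCoeff ν (i :: l)‖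
        = ‖stepCoeff ν (ν - wordPowerDrop l) i‖ * ‖wordCoeff ν l‖ := norm_mul _ _
      _ ≤ (((J : ℝ) + 2) ^ 2 * ‖ν‖ ^ powerDrop i) *
            (((J : ℝ) + 2) ^ (2 * l.length) * ‖ν‖ ^ wordPowerDrop l) :=
          mul_le_mul (norm_stepCoeff_le hν (by omega) i) (norm_wordCoeff_le hν l (by omega))
            (norm_nonneg _) (by positivity)
      _ = ((J : ℝ) + 2) ^ (2 * (i :: l).length) * ‖ν‖ ^ wordPowerDrop (i :: l) := by
          rw [wordPowerDrop_cons, List.length_cons]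
          ring

lemma contDiffOn_Wop {s : Set ℝ} (hs : IsOpen s) (ν : ℂ) (i : Fin 2) {f : ℝ → ℂ}
    (hf : ContDiffOn ℝ (⊤ : ℕ∞) f s) : ContDiffOn ℝ (⊤ : ℕ∞) (Wop ν i f) s := by
  have h1 : ContDiffOn ℝ (⊤ : ℕ∞) (deriv f) s := hf.deriv_of_isOpen hs (by simp)
  have h2 : ContDiffOn ℝ (⊤ : ℕ∞) (deriv (deriv f)) s := h1.deriv_of_isOpen hs (by simp)
  fin_cases i
  · exact h2
  · exact contDiffOn_const.mul
      ((contDiffOn_const.mul h1).sub (ofRealCLM.contDiff.contDiffOn.mul h2))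

lemma contDiffOn_wordOp {s : Set ℝ} (hs : IsOpen s) (ν : ℂ) (l : List (Fin 2)) {f : ℝ → ℂ}
    (hf : ContDiffOn ℝ (⊤ : ℕ∞) f s) : ContDiffOn ℝ (⊤ : ℕ∞) (wordOp ν l f) s := by
  induction l with
  | nil => exact hf
  | cons i l ih => exact contDiffOn_Wop hs ν i ih

section Gfun

variable {q : ℝ → ℂ} {a : ℝ}

lemma contDiffOn_gfun (hq : ContDiff ℝ (⊤ : ℕ∞) q) :
    ContDiffOn ℝ (⊤ : ℕ∞) (gfun q a) (Set.Ioi 0) :=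
  (hq.contDiffOn.mul ((contDiffOn_ofReal_cpow _).sub contDiffOn_const)).congr
    fun _ hx => if_pos hx

lemma eqOn_deriv_gfun (hone : Set.EqOn q 1 (Set.Icc (1 : ℝ) (5 / 4))) :
    Set.EqOn (deriv (gfun q a)) (fun x => (I * a + 1) * (x : ℂ) ^ (I * a))
      (Set.Ioo (1 : ℝ) (5 / 4)) := by
  intro x hx
  have hx0 : 0 < x := one_pos.trans hx.1
  have hg : gfun q a =ᶠ[nhds x] fun y => (y : ℂ) ^ (I * a + 1) - 1 :=
    Filter.eventuallyEq_of_mem (isOpen_Ioo.mem_nhds hx) fun y hy => by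
      simp [gfun, one_pos.trans hy.1, hone (Set.Ioo_subset_Icc_self hy)]
  rw [hg.deriv_eq, ((hasDerivAt_ofReal_cpow _ hx0).sub_const 1).deriv, add_sub_cancel_right]

lemma eqOn_wordOp_deriv_gfun (hq : ContDiff ℝ (⊤ : ℕ∞) q)
    (hone : Set.EqOn q 1 (Set.Icc (1 : ℝ) (5 / 4))) (l : List (Fin 2)) :
    Set.EqOn (wordOp (I * a) l (deriv (gfun q a)))
      (fun x => (I * a + 1) * wordCoeff (I * a) l * (x : ℂ) ^ (I * a - wordPowerDrop l))
      (Set.Icc (1 : ℝ) (5 / 4)) := by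
  have hIcc : Set.Icc (1 : ℝ) (5 / 4) ⊆ Set.Ioi 0 := fun x hx => one_pos.trans_le hx.1
  have hlhs := contDiffOn_wordOp isOpen_Ioi (I * a) l
    ((contDiffOn_gfun (a := a) hq).deriv_of_isOpen isOpen_Ioi (by simp))
  have hrhs := (contDiffOn_const (c := (I * a + 1) * wordCoeff (I * a) l)).mul
    (contDiffOn_ofReal_cpow (I * a - wordPowerDrop l))
  refine Set.EqOn.of_subset_closure ?_ (hlhs.continuousOn.mono hIcc) (hrhs.continuousOn.mono hIcc)
    Set.Ioo_subset_Icc_self (by rw [closure_Ioo (by norm_num)])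
  exact eqOn_wordOp_const_mul_cpow isOpen_Ioo (hIcc.trans' Set.Ioo_subset_Icc_self) _
    (eqOn_deriv_gfun hone) l

end Gfun

lemma norm_wordOp_deriv_gfun_le {q : ℝ → ℂ} (hq : ContDiff ℝ (⊤ : ℕ∞) q)
    (hone : Set.EqOn q 1 (Set.Icc (1 : ℝ) (5 / 4))) {a : ℝ} (ha : 1 ≤ |a|)
    {l : List (Fin 2)} {J : ℕ} (hl : wordPowerDrop l ≤ J) {x : ℝ}
    (hx : x ∈ Set.Icc (1 : ℝ) (5 / 4)) :
    ‖wordOp (I * a) l (deriv (gfun q a)) x‖ ≤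
      2 * ((J : ℝ) + 2) ^ (2 * l.length) * |a| ^ (wordPowerDrop l + 1) := by
  have hνa : ‖I * (a : ℂ)‖ = |a| := by simp
  have hν1 : ‖I * (a : ℂ) + 1‖ ≤ 2 * |a| := by
    have := norm_add_le (I * (a : ℂ)) 1
    rw [hνa, norm_one] at this
    linarith
  have hpow : ‖(x : ℂ) ^ (I * a - wordPowerDrop l)‖ ≤ 1 := by
    rw [norm_cpow_eq_rpow_re_of_pos (one_pos.trans_le hx.1)]
    exact Real.rpow_le_one_of_one_le_of_nonpos hx.1 (by simp)
  have hcoeff := norm_wordCoeff_le (hνa ▸ ha : 1 ≤ ‖I * (a : ℂ)‖) l hl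
  rw [hνa] at hcoeff
  rw [eqOn_wordOp_deriv_gfun hq hone l hx, norm_mul, norm_mul]
  calc ‖I * (a : ℂ) + 1‖ * ‖wordCoeff (I * a) l‖ * ‖(x : ℂ) ^ (I * a - wordPowerDrop l)‖
      ≤ (2 * |a|) * (((J : ℝ) + 2) ^ (2 * l.length) * |a| ^ wordPowerDrop l) * 1 := by gcongr
    _ = 2 * ((J : ℝ) + 2) ^ (2 * l.length) * |a| ^ (wordPowerDrop l + 1) := by ring

lemma norm_Aop_deriv_gfun_le {q : ℝ → ℂ} (hq : ContDiff ℝ (⊤ : ℕ∞) q)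
    (hone : Set.EqOn q 1 (Set.Icc (1 : ℝ) (5 / 4))) {a : ℝ} (ha : 1 ≤ |a|)
    {β m n : ℕ} (hm : m < β) (hmn : m + n ≤ β) {x : ℝ} (hx : x ∈ Set.Icc (1 : ℝ) (5 / 4)) :
    ‖Aop (I * a) m n (deriv (gfun q a)) x‖ ≤
      2 ^ β * (2 * (2 * (β : ℝ) + 2) ^ (2 * β)) * |a| ^ (2 * β) := by
  set B : ℝ := 2 * (2 * (β : ℝ) + 2) ^ (2 * β) * |a| ^ (2 * β)
  have hword : ∀ s : Fin (m + n) → Fin 2, #{i | s i = 0} = m →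
      ‖wordOp (I * a) (List.ofFn s) (deriv (gfun q a)) x‖ ≤ B := by
    intro s hs
    have hdrop : wordPowerDrop (List.ofFn s) = 2 * m + n := by rw [wordPowerDrop_ofFn, hs]; ring
    calc _ ≤ 2 * (((2 * β : ℕ) : ℝ) + 2) ^ (2 * (List.ofFn s).length) *
          |a| ^ (wordPowerDrop (List.ofFn s) + 1) :=
          norm_wordOp_deriv_gfun_le hq hone ha (by omega) hx
      _ ≤ B := by
        rw [List.length_ofFn, hdrop]
        push_cast
        have hJ : (2 * (β : ℝ) + 2) ^ (2 * (m + n)) ≤ (2 * (β : ℝ) + 2) ^ (2 * β) :=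
          pow_le_pow_right₀ (by linarith) (by omega)
        have ha' : |a| ^ (2 * m + n + 1) ≤ |a| ^ (2 * β) := pow_le_pow_right₀ ha (by omega)
        exact mul_le_mul (by linarith) ha' (by positivity) (by positivity)
  have hcard : (#{s : Fin (m + n) → Fin 2 | #{i | s i = 0} = m} : ℝ) ≤ 2 ^ β := by
    calc (#{s : Fin (m + n) → Fin 2 | #{i | s i = 0} = m} : ℝ)
        ≤ (2 : ℝ) ^ (m + n) := by exact_mod_cast (card_filter_le _ _).trans (by simp)
      _ ≤ 2 ^ β := pow_le_pow_right₀ one_le_two hmn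
  rw [Aop_eq_sum_wordOp, Finset.sum_apply]
  calc _ ≤ ∑ s : Fin (m + n) → Fin 2 with #{i | s i = 0} = m, B :=
        norm_sum_le_of_le _ fun s hs => hword s (mem_filter.1 hs).2
    _ = (#{s : Fin (m + n) → Fin 2 | #{i | s i = 0} = m} : ℝ) * B := by
        rw [sum_const, nsmul_eq_mul]
    _ ≤ 2 ^ β * B := by gcongr
    _ = _ := by ring

lemma norm_mul_sum_sum_le {β : ℕ} {t B : ℝ} (ht : t ∈ Set.Icc (0 : ℝ) 1) (hB : 0 ≤ B)
    {F : ℕ → ℕ → ℂ} (hF : ∀ m < β, ∀ n ≤ β - m, ‖F m n‖ ≤ B) :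
    ‖(t : ℂ) ^ β * ∑ m ∈ range β, ∑ n ∈ range (β - m + 1), ((t : ℂ) - 1) ^ m * F m n‖ ≤
      ((β : ℝ) + 1) ^ 2 * B := by
  have ht0 : ‖(t : ℂ)‖ ≤ 1 := by
    rw [norm_real, Real.norm_eq_abs, abs_le]; constructor <;> linarith [ht.1, ht.2]
  have ht1 : ‖(t : ℂ) - 1‖ ≤ 1 := by
    rw [← ofReal_one, ← ofReal_sub, norm_real, Real.norm_eq_abs, abs_le]
    constructor <;> linarith [ht.1, ht.2]
  have hinner : ∀ m ∈ range β,
      ‖∑ n ∈ range (β - m + 1), ((t : ℂ) - 1) ^ m * F m n‖ ≤ ((β : ℝ) + 1) * B := by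
    intro m hm
    refine (norm_sum_le_of_le _ (n := fun _ => B) fun n hn => ?_).trans ?_
    · rw [norm_mul, norm_pow]
      have := hF m (mem_range.1 hm) n (by rw [mem_range] at hn; omega)
      calc _ ≤ 1 * B := by gcongr; exact pow_le_one₀ (norm_nonneg _) ht1
        _ = B := one_mul B
    · rw [sum_const, card_range, nsmul_eq_mul]
      gcongr
      exact_mod_cast (by omega : β - m + 1 ≤ β + 1)
  have houter := (norm_sum_le_of_le _ hinner).trans_eq (by rw [sum_const, card_range, nsmul_eq_mul])
  rw [norm_mul, norm_pow]
  calc _ ≤ 1 * ((β : ℝ) * (((β : ℝ) + 1) * B)) := by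
        gcongr
        exact pow_le_one₀ (norm_nonneg _) ht0
    _ ≤ ((β : ℝ) + 1) ^ 2 * B := by nlinarith

theorem lower_order_terms_upper_bound_general (β : ℕ) (q : ℝ → ℂ)
    (hq : ContDiff ℝ (⊤ : ℕ∞) q)
    (hone : Set.EqOn q 1 (Set.Icc (1 : ℝ) (5 / 4))) :
    ∃ C > 0, ∀ a : ℝ, 4 ≤ |a| →
      ∀ ξ ∈ Set.Icc (1 : ℝ) (1 + 1 / |a|),
        ‖∫ t in (0 : ℝ)..1, (t : ℂ) ^ β *
            ∑ m ∈ range β, ∑ n ∈ range (β - m + 1),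
              ((t : ℂ) - 1) ^ m *
                Aop (Complex.I * a) m n (deriv (gfun q a)) (1 + t * (ξ - 1))‖ ≤
          C * |a| ^ (2 * β) := by
  set K : ℝ := 2 ^ β * (2 * (2 * (β : ℝ) + 2) ^ (2 * β))
  refine ⟨((β : ℝ) + 1) ^ 2 * K, by positivity, fun a ha ξ hξ => ?_⟩
  have ha1 : 1 ≤ |a| := by linarith
  have hξ4 : ξ - 1 ≤ 1 / 4 := by
    linarith [hξ.2, one_div_le_one_div_of_le (by norm_num : (0 : ℝ) < 4) ha]
  have hintegrand : ∀ t ∈ Set.uIoc (0 : ℝ) 1, ‖(t : ℂ) ^ β *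
      ∑ m ∈ range β, ∑ n ∈ range (β - m + 1), ((t : ℂ) - 1) ^ m *
        Aop (I * a) m n (deriv (gfun q a)) (1 + t * (ξ - 1))‖ ≤
      ((β : ℝ) + 1) ^ 2 * (K * |a| ^ (2 * β)) := by
    intro t ht
    rw [Set.uIoc_of_le zero_le_one] at ht
    have hx : 1 + t * (ξ - 1) ∈ Set.Icc (1 : ℝ) (5 / 4) := by
      constructor <;> nlinarith [ht.1, ht.2, hξ.1]
    exact norm_mul_sum_sum_le (Set.Ioc_subset_Icc_self ht) (by positivity)
      fun m hm n hn => norm_Aop_deriv_gfun_le hq hone ha1 hm (by omega) hx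
  simpa [mul_assoc] using intervalIntegral.norm_integral_le_of_norm_le_const hintegrand

/-- Upper bound for the lower-order terms:
`|∫₀¹ t^β Σ_{m+n≤β, m≤β−1} (t−1)^m (A_{m,n} g′)(1+t(ξ−1)) dt| ≤ C |a|^{2β}`
for all `ξ ∈ I_ν = [1, 1+1/|a|]` and `|a| ≥ 4`. -/
theorem lower_order_terms_upper_bound (β : ℕ) (q : ℝ → ℂ)
    (hq : ContDiff ℝ (⊤ : ℕ∞) q)
    (hsupp : Function.support q ⊆ Set.Icc (3 / 4 : ℝ) (4 / 3))
    (hone : Set.EqOn q 1 (Set.Icc (1 : ℝ) (5 / 4))) :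
    ∃ C > 0, ∀ a : ℝ, 4 ≤ |a| →
      ∀ ξ ∈ Set.Icc (1 : ℝ) (1 + 1 / |a|),
        ‖∫ t in (0 : ℝ)..1, (t : ℂ) ^ β *
            ∑ m ∈ range β, ∑ n ∈ range (β - m + 1),
              ((t : ℂ) - 1) ^ m *
                Aop (Complex.I * a) m n (deriv (gfun q a)) (1 + t * (ξ - 1))‖ ≤
          C * |a| ^ (2 * β) :=
  lower_order_terms_upper_bound_general β q hq hone
end

section
/- For every β ∈ ℕ∖{0} there is a constant C > 4 such that the following holds. For every real a with |a| ≥ C, setting ν = ia, and for every ξ ∈ I_ν = [1, 1 + 1/|a|], one has | ∫₀¹ t^β·(t−1)^β · ((d/dξ)^{2β} g′)(1 + t(ξ−1)) dt | ≥ |a|^{2β+1} / C, where g′ denotes the derivative of g and (d/dξ)^{2β} the 2β-fold derivative; equivalently, since q ≡ 1 on I_ν and 1 + t(ξ−1) ∈ I_ν, the integrand equals ∏_{l=0}^{2β} (ν+1−l) · (1 + t(ξ−1))^{ν−2β}. -/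
open Complex intervalIntegral

/-!
Since `q = 1` on `[1, 5/4]`, there `g(x) = x^{ν+1} - 1`; as `g` is smooth at these points, its
iterated derivatives can be computed within the closed interval (which covers the endpoint
`x = 1`), giving `g^{(2β+1)}(x) = ∏_{l ≤ 2β} (ν + 1 - l) · x^{ν - 2β}`. Every factor of the product
has imaginary part `a`, so it has modulus at least `|a|^{2β+1}`. Along the path
`x = 1 + t(ξ - 1)` we have `|a| log x ≤ |a| (ξ - 1) ≤ 1`, so the phase `x^{ia}` has real part at
least `cos 1`, and the real part of the remaining integral is at least
`(5/4)^{-2β} cos 1 ∫₀¹ t^β (1 - t)^β dt > 0`.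
-/

open Set Finset Topology

theorem contDiffAt_ofReal_cpow_const {x : ℝ} (hx : 0 < x) (c : ℂ) {n : WithTop ℕ∞} :
    ContDiffAt ℝ n (fun y : ℝ => (y : ℂ) ^ c) x :=
  ((analyticAt_id.cpow analyticAt_const (ofReal_mem_slitPlane.mpr hx)).contDiffAt
    |>.restrict_scalars ℝ).comp x ofRealCLM.contDiff.contDiffAt

theorem iteratedDeriv_ofReal_cpow_const (c : ℂ) (n : ℕ) {x : ℝ} (hx : x ≠ 0) :
    iteratedDeriv n (fun y : ℝ => (y : ℂ) ^ c) x
      = (∏ l ∈ range n, (c - l)) * (x : ℂ) ^ (c - n) := by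
  induction n generalizing x with
  | zero => simp
  | succ n ih =>
    have hnear : iteratedDeriv n (fun y : ℝ => (y : ℂ) ^ c)
        =ᶠ[𝓝 x] fun y => (∏ l ∈ range n, (c - l)) * (y : ℂ) ^ (c - n) :=
      (eventually_ne_nhds hx).mono fun y hy => ih hy
    rw [iteratedDeriv_succ, hnear.deriv_eq, deriv_const_mul_field, prod_range_succ]
    by_cases hcn : c - n = 0
    · simp [hcn]
    · rw [deriv_ofReal_cpow_const hx hcn]
      push_cast
      ring_nf

theorem iteratedDeriv_eq_of_eqOn_Icc {F : Type*} [NormedAddCommGroup F] [NormedSpace ℝ F]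
    {f g : ℝ → F} {u v x : ℝ} {n : ℕ} (huv : u < v) (hfg : EqOn f g (Icc u v))
    (hx : x ∈ Icc u v) (hf : ContDiffAt ℝ n f x) (hg : ContDiffAt ℝ n g x) :
    iteratedDeriv n f x = iteratedDeriv n g x := by
  rw [← iteratedDerivWithin_eq_iteratedDeriv (uniqueDiffOn_Icc huv) hf hx,
    ← iteratedDerivWithin_eq_iteratedDeriv (uniqueDiffOn_Icc huv) hg hx]
  exact iteratedDerivWithin_congr hfg hx

theorem contDiffAt_gfun {q : ℝ → ℂ} (a : ℝ) {x : ℝ} {n : WithTop ℕ∞}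
    (hq : ContDiffAt ℝ n q x) (hx : 0 < x) : ContDiffAt ℝ n (gfun q a) x := by
  have hnear : gfun q a =ᶠ[𝓝 x] fun y => q y * ((y : ℂ) ^ (I * a + 1) - 1) :=
    (eventually_gt_nhds hx).mono fun y hy => if_pos hy
  exact (hq.mul ((contDiffAt_ofReal_cpow_const hx _).sub contDiffAt_const)).congr_of_eventuallyEq
    hnear

theorem iteratedDeriv_succ_gfun {q : ℝ → ℂ} (a : ℝ) (hq : ContDiff ℝ (⊤ : ℕ∞) q)
    (hone : EqOn q 1 (Icc (1 : ℝ) (5 / 4))) (n : ℕ) {x : ℝ} (hx : x ∈ Icc (1 : ℝ) (5 / 4)) :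
    iteratedDeriv (n + 1) (gfun q a) x
      = (∏ l ∈ range (n + 1), (I * a + 1 - l)) * (x : ℂ) ^ (I * a + 1 - (n + 1 : ℕ)) := by
  have hx0 : 0 < x := one_pos.trans_le hx.1
  have hfg : EqOn (gfun q a) (fun y : ℝ => (y : ℂ) ^ (I * a + 1) - 1) (Icc 1 (5 / 4)) :=
    fun y hy => by simp [gfun, one_pos.trans_le hy.1, hone hy]
  rw [iteratedDeriv_eq_of_eqOn_Icc (by norm_num) hfg hx
      (contDiffAt_gfun a (hq.of_le (by exact_mod_cast le_top)).contDiffAt hx0)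
      ((contDiffAt_ofReal_cpow_const hx0 _).sub contDiffAt_const),
    iteratedDeriv_succ', deriv_sub_const_fun, ← iteratedDeriv_succ',
    iteratedDeriv_ofReal_cpow_const _ _ hx0.ne']

theorem pow_abs_im_le_norm_prod_sub_natCast (z : ℂ) (n : ℕ) :
    |z.im| ^ n ≤ ‖∏ l ∈ range n, (z - l)‖ := by
  calc |z.im| ^ n = ∏ _l ∈ range n, |z.im| := by rw [prod_const, card_range]
    _ ≤ ∏ l ∈ range n, ‖z - l‖ :=
      prod_le_prod (fun _ _ => abs_nonneg _) fun l _ => by simpa using abs_im_le_norm (z - l)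
    _ = ‖∏ l ∈ range n, (z - l)‖ := (norm_prod _ _).symm

theorem re_ofReal_cpow {x : ℝ} (hx : 0 < x) (s : ℂ) :
    ((x : ℂ) ^ s).re = x ^ s.re * Real.cos (s.im * Real.log x) := by
  rw [cpow_def_of_ne_zero (ofReal_ne_zero.mpr hx.ne'), ← ofReal_log hx.le, exp_re,
    Real.rpow_def_of_pos hx]
  simp [mul_comm]

theorem rpow_mul_cos_one_le_re_ofReal_cpow {x v : ℝ} {s : ℂ} (hs : s.re ≤ 0) (hx : 1 ≤ x)
    (hxv : x ≤ v) (him : |s.im| * (x - 1) ≤ 1) :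
    v ^ s.re * Real.cos 1 ≤ ((x : ℂ) ^ s).re := by
  have hx0 : 0 < x := one_pos.trans_le hx
  have hphase : |s.im * Real.log x| ≤ 1 := by
    rw [abs_mul, abs_of_nonneg (Real.log_nonneg hx)]
    exact (mul_le_mul_of_nonneg_left (Real.log_le_sub_one_of_pos hx0) (abs_nonneg _)).trans him
  have hcos : Real.cos 1 ≤ Real.cos (s.im * Real.log x) := by
    rw [← Real.cos_abs (s.im * _)]
    exact Real.cos_le_cos_of_nonneg_of_le_pi (abs_nonneg _)
      (by linarith [Real.pi_gt_three]) hphase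
  rw [re_ofReal_cpow hx0]
  exact mul_le_mul (Real.rpow_le_rpow_of_nonpos hx0 hxv hs) hcos Real.cos_one_pos.le
    (Real.rpow_nonneg hx0.le _)

theorem integral_le_norm_integral_of_le_re {f : ℝ → ℂ} {g : ℝ → ℝ} {u v : ℝ} (huv : u ≤ v)
    (hf : IntervalIntegrable f MeasureTheory.volume u v)
    (hg : IntervalIntegrable g MeasureTheory.volume u v) (hgf : ∀ t ∈ Icc u v, g t ≤ (f t).re) :
    ∫ t in u..v, g t ≤ ‖∫ t in u..v, f t‖ :=
  calc ∫ t in u..v, g t ≤ ∫ t in u..v, (f t).re :=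
        integral_mono_on huv hg ⟨hf.1.re, hf.2.re⟩ hgf
    _ = (∫ t in u..v, f t).re := intervalIntegral_re hf
    _ ≤ ‖∫ t in u..v, f t‖ := re_le_norm _

theorem integral_pow_mul_one_sub_pow_pos (m n : ℕ) :
    0 < ∫ t in (0 : ℝ)..1, t ^ m * (1 - t) ^ n :=
  intervalIntegral_pos_of_pos_on ((by fun_prop : Continuous _).intervalIntegrable _ _)
    (fun _ ht => mul_pos (pow_pos ht.1 m) (pow_pos (sub_pos.mpr ht.2) n)) one_pos

theorem mul_integral_le_norm_integral_mul_ofReal_cpow {w : ℝ → ℝ} (hw : Continuous w)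
    (hw0 : ∀ t ∈ Icc (0 : ℝ) 1, 0 ≤ w t) {s : ℂ} (hs : s.re ≤ 0) {ξ v : ℝ} (hξ : 1 ≤ ξ)
    (hξv : ξ ≤ v) (him : |s.im| * (ξ - 1) ≤ 1) :
    v ^ s.re * Real.cos 1 * ∫ t in (0 : ℝ)..1, w t
      ≤ ‖∫ t in (0 : ℝ)..1, (w t : ℂ) * ((1 + t * (ξ - 1) : ℝ) : ℂ) ^ s‖ := by
  have hpath : ∀ t ∈ Icc (0 : ℝ) 1, 1 ≤ 1 + t * (ξ - 1) ∧ 1 + t * (ξ - 1) ≤ ξ := fun t ht =>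
    ⟨by nlinarith [ht.1], by nlinarith [ht.2]⟩
  have hcont : ContinuousOn (fun t : ℝ => (w t : ℂ) * ((1 + t * (ξ - 1) : ℝ) : ℂ) ^ s)
      (uIcc 0 1) := by
    rw [Set.uIcc_of_le zero_le_one]
    refine fun t ht => ContinuousAt.continuousWithinAt ?_
    exact (continuous_ofReal.comp hw).continuousAt.mul
      ((continuousAt_ofReal_cpow_const _ s
        (Or.inr (one_pos.trans_le (hpath t ht).1).ne')).comp
          (f := fun t : ℝ => 1 + t * (ξ - 1)) (by fun_prop))
  rw [← integral_const_mul]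
  refine integral_le_norm_integral_of_le_re zero_le_one hcont.intervalIntegrable
    ((by fun_prop : Continuous _).intervalIntegrable _ _) fun t ht => ?_
  rw [re_ofReal_mul, mul_comm]
  exact mul_le_mul_of_nonneg_left (rpow_mul_cos_one_le_re_ofReal_cpow hs (hpath t ht).1
    ((hpath t ht).2.trans hξv) (him.trans' (by gcongr; exact (hpath t ht).2))) (hw0 t ht)

theorem integral_iterate_deriv_gfun_eq (β : ℕ) {q : ℝ → ℂ} (a : ℝ) (hq : ContDiff ℝ (⊤ : ℕ∞) q)
    (hone : EqOn q 1 (Icc (1 : ℝ) (5 / 4))) {ξ : ℝ} (hξ : ξ ∈ Icc (1 : ℝ) (5 / 4)) :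
    ∫ t in (0 : ℝ)..1, (t : ℂ) ^ β * ((t : ℂ) - 1) ^ β *
        deriv^[2 * β] (deriv (gfun q a)) (1 + t * (ξ - 1))
      = (-1) ^ β * (∏ l ∈ range (2 * β + 1), (I * a + 1 - l)) *
        ∫ t in (0 : ℝ)..1, ((t ^ β * (1 - t) ^ β : ℝ) : ℂ) *
          ((1 + t * (ξ - 1) : ℝ) : ℂ) ^ (I * a + 1 - (2 * β + 1 : ℕ)) := by
  rw [← integral_const_mul]
  refine integral_congr fun t ht => ?_
  rw [Set.uIcc_of_le zero_le_one] at ht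
  have hx : 1 + t * (ξ - 1) ∈ Icc (1 : ℝ) (5 / 4) :=
    ⟨by nlinarith [ht.1, hξ.1], by nlinarith [ht.1, ht.2, hξ.1, hξ.2]⟩
  simp only [← Function.iterate_succ_apply, ← iteratedDeriv_eq_iterate]
  rw [iteratedDeriv_succ_gfun a hq hone (2 * β) hx, show (t : ℂ) - 1 = -(1 - t) by ring, neg_pow]
  push_cast
  ring

theorem main_term_lower_bound_general (β : ℕ) (q : ℝ → ℂ)
    (hq : ContDiff ℝ (⊤ : ℕ∞) q)
    (hone : Set.EqOn q 1 (Set.Icc (1 : ℝ) (5 / 4))) :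
    ∃ C > 4, ∀ a : ℝ, C ≤ |a| →
      ∀ ξ ∈ Set.Icc (1 : ℝ) (1 + 1 / |a|),
        |a| ^ (2 * β + 1) / C ≤
          ‖∫ t in (0 : ℝ)..1, (t : ℂ) ^ β * ((t : ℂ) - 1) ^ β *
              deriv^[2 * β] (deriv (gfun q a)) (1 + t * (ξ - 1))‖ := by
  set m := (5 / 4 : ℝ) ^ (-(2 * β : ℝ)) * Real.cos 1 * ∫ t in (0 : ℝ)..1, t ^ β * (1 - t) ^ β
  have hm : 0 < m := mul_pos (mul_pos (by positivity) Real.cos_one_pos)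
    (integral_pow_mul_one_sub_pow_pos β β)
  refine ⟨4 + m⁻¹, by linarith [inv_pos.mpr hm], fun a ha ξ hξ => ?_⟩
  have ha4 : 4 ≤ |a| := by linarith [inv_pos.mpr hm]
  have hphase : |a| * (ξ - 1) ≤ 1 := (le_div_iff₀' (by linarith)).1 (by linarith [hξ.2])
  have hξ54 : ξ ≤ 5 / 4 := by
    have : 1 / |a| ≤ 1 / 4 := one_div_le_one_div_of_le (by norm_num) ha4
    linarith [hξ.2]
  set s : ℂ := I * a + 1 - (2 * β + 1 : ℕ)
  have hs : s.re = -(2 * β : ℝ) ∧ s.im = a := by simp [s]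
  have hP : |a| ^ (2 * β + 1) ≤ ‖∏ l ∈ range (2 * β + 1), (I * a + 1 - l)‖ := by
    simpa using pow_abs_im_le_norm_prod_sub_natCast (I * a + 1) (2 * β + 1)
  have hJ : m ≤ ‖∫ t in (0 : ℝ)..1, ((t ^ β * (1 - t) ^ β : ℝ) : ℂ) *
      ((1 + t * (ξ - 1) : ℝ) : ℂ) ^ s‖ := by
    have := mul_integral_le_norm_integral_mul_ofReal_cpow (w := fun t => t ^ β * (1 - t) ^ β)
      (by fun_prop) (fun t ht => mul_nonneg (pow_nonneg ht.1 β) (pow_nonneg (sub_nonneg.2 ht.2) β))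
      (s := s) (by rw [hs.1]; exact neg_nonpos.2 (by positivity)) hξ.1 hξ54 (by rwa [hs.2])
    rwa [hs.1] at this
  rw [integral_iterate_deriv_gfun_eq β a hq hone ⟨hξ.1, hξ54⟩, norm_mul, norm_mul, norm_pow,
    norm_neg, norm_one, one_pow, one_mul]
  calc |a| ^ (2 * β + 1) / (4 + m⁻¹) ≤ |a| ^ (2 * β + 1) / m⁻¹ :=
        div_le_div_of_nonneg_left (by positivity) (inv_pos.mpr hm) (by linarith)
    _ = |a| ^ (2 * β + 1) * m := div_inv_eq_mul _ _
    _ ≤ _ := mul_le_mul hP hJ hm.le (norm_nonneg _)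

/-- Lower bound for the main term:
`|∫₀¹ t^β (t−1)^β ((d/dξ)^{2β} g′)(1+t(ξ−1)) dt| ≥ |a|^{2β+1}/C`
for all `ξ ∈ I_ν = [1, 1+1/|a|]` and `|a| ≥ C`. -/
theorem main_term_lower_bound (β : ℕ) (hβ : β ≠ 0) (q : ℝ → ℂ)
    (hq : ContDiff ℝ (⊤ : ℕ∞) q)
    (hsupp : Function.support q ⊆ Set.Icc (3 / 4 : ℝ) (4 / 3))
    (hone : Set.EqOn q 1 (Set.Icc (1 : ℝ) (5 / 4))) :
    ∃ C > 4, ∀ a : ℝ, C ≤ |a| →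
      ∀ ξ ∈ Set.Icc (1 : ℝ) (1 + 1 / |a|),
        |a| ^ (2 * β + 1) / C ≤
          ‖∫ t in (0 : ℝ)..1, (t : ℂ) ^ β * ((t : ℂ) - 1) ^ β *
              deriv^[2 * β] (deriv (gfun q a)) (1 + t * (ξ - 1))‖ :=
  main_term_lower_bound_general β q hq hone
end
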